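/- arXiv:2311.17448 — 8 statements merged into one kernel-verified Lean document; each statement's English description precedes it below -/
import Mathlib

section
/- Let N be a unitarily-invariant norm on M_n(ℂ), let Y ∈ M_n(ℂ), and let f : [0,∞) → [0,∞) be concave. Then N(f(|Y|)) ≤ N(I) · f(N(Y)/N(I)), where |Y| = (Y*Y)^{1/2} and I is the identity matrix. -/
/-!
Diagonalize `|Y| = U Σ U*` with `Σ = diag σ` the singular values of `Y`. Unitary invariance gives
`N(f(|Y|)) = N(diag f(σ))` and, through the polar decomposition `Y = C Σ U*`, `N(Y) = N(Σ)`.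
With `t = N(Σ)/N(I)`, a line `x ↦ f(t) + b (x - t)` of slope `b ≥ 0` that lies above `f` at the
points `σ i` and has nonnegative intercept exists by concavity. Since `N(P Q R) ≤ ‖P‖ N(Q) ‖R‖`,
`N` is monotone in the moduli of diagonal entries, so
`N(diag f(σ)) ≤ N((f(t) - b t) I + b Σ) ≤ (f(t) - b t) N(I) + b N(Σ) = N(I) f(t)`.
If `N(I) = 0`, then already `N(P) = N(P I I) ≤ ‖P‖ N(I) ‖I‖ = 0`.
-/

open scoped ComplexOrder Matrix.Norms.L2Operator

/-- The positive semidefinite square root of a positive semidefinite matrix -/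
noncomputable def Matrix.PosSemidef.sqrt {𝕜 : Type*} [RCLike 𝕜] {n : Type*} [Fintype n]
    [DecidableEq n] {A : Matrix n n 𝕜} (hA : Matrix.PosSemidef A) : Matrix n n 𝕜 :=
  hA.1.eigenvectorUnitary.1 * Matrix.diagonal ((↑) ∘ (Real.sqrt ∘ hA.1.eigenvalues)) *
  (star hA.1.eigenvectorUnitary : Matrix n n 𝕜)


open Set Matrix

theorem ConcaveOn.monotoneOn_of_nonneg {f : ℝ → ℝ} (hf : ConcaveOn ℝ (Ici 0) f)
    (hf_nonneg : ∀ x, 0 ≤ x → 0 ≤ f x) : MonotoneOn f (Ici 0) := by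
  intro x hx y hy hxy
  rcases hxy.eq_or_lt with rfl | hxy
  · rfl
  by_contra! hyx
  obtain ⟨m, hm_def, hm⟩ : ∃ m, (f y - f x) / (y - x) = m ∧ m < 0 :=
    ⟨_, rfl, div_neg_of_neg_of_pos (by linarith) (by linarith)⟩
  -- beyond `y`, `f` stays below the chord through `x` and `y`, which drops below `-1` at `z`
  set z := y + (f y + 1) / -m
  have hyz : y < z := lt_add_of_pos_right y (div_pos (by linarith [hf_nonneg y hy]) (by linarith))
  have hz : 0 ≤ z := le_trans hy hyz.le
  have hslope := hf.slope_anti_adjacent hx hz hxy hyz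
  rw [hm_def, div_le_iff₀ (by linarith)] at hslope
  have : m * (z - y) = -(f y + 1) := by simp only [z]; field_simp [hm.ne]; ring
  linarith [hf_nonneg z hz]

theorem ConcaveOn.exists_nonneg_supporting_slope {f : ℝ → ℝ} (hf : ConcaveOn ℝ (Ici 0) f)
    (hf_nonneg : ∀ x, 0 ≤ x → 0 ≤ f x) {t : ℝ} (ht : 0 ≤ t) (s : Finset ℝ)
    (hs : ∀ x ∈ s, 0 ≤ x) :
    ∃ b, 0 ≤ b ∧ b * t ≤ f t ∧ ∀ x ∈ s, f x ≤ f t + b * (x - t) := by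
  classical
  -- the largest slope of a chord from `t` to a point of `s` to its right, or `0`
  let T : Finset ℝ := insert 0 ((s.filter (t < ·)).image fun y ↦ (f y - f t) / (y - t))
  let b := T.max' (Finset.insert_nonempty _ _)
  have hb_nonneg : 0 ≤ b := T.le_max' 0 (Finset.mem_insert_self _ _)
  have hb_ge : ∀ y ∈ s, t < y → (f y - f t) / (y - t) ≤ b := fun y hy hty ↦
    T.le_max' _ (Finset.mem_insert_of_mem (Finset.mem_image_of_mem _ (by simp [hy, hty])))
  have hb_le : ∀ x, 0 ≤ x → x < t → b ≤ (f t - f x) / (t - x) := by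
    intro x hx hxt
    refine T.max'_le _ _ fun c hc ↦ ?_
    rcases Finset.mem_insert.1 hc with rfl | hc
    · exact div_nonneg (sub_nonneg.2 (hf.monotoneOn_of_nonneg hf_nonneg hx ht hxt.le))
        (sub_nonneg.2 hxt.le)
    · obtain ⟨y, hy, rfl⟩ := Finset.mem_image.1 hc
      exact hf.slope_anti_adjacent hx (ht.trans (Finset.mem_filter.1 hy).2.le) hxt
        (Finset.mem_filter.1 hy).2
  refine ⟨b, hb_nonneg, ?_, fun x hx ↦ ?_⟩
  · rcases ht.eq_or_lt with rfl | ht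
    · simpa using hf_nonneg 0 le_rfl
    · have := hb_le 0 le_rfl ht
      rw [sub_zero, le_div_iff₀ ht] at this
      linarith [hf_nonneg 0 le_rfl]
  · rcases lt_trichotomy x t with hxt | rfl | htx
    · have := hb_le x (hs x hx) hxt
      rw [le_div_iff₀ (sub_pos.2 hxt)] at this
      linarith
    · simp
    · have := hb_ge x hx htx
      rw [div_le_iff₀ (sub_pos.2 htx)] at this
      linarith

variable {ι 𝕜 : Type*} [Fintype ι] [DecidableEq ι] [RCLike 𝕜]

namespace Seminorm

theorem apply_diagonal_le_of_norm_le (p : Seminorm 𝕜 (Matrix ι ι 𝕜))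
    (hp_mul : ∀ P Q R : Matrix ι ι 𝕜, p (P * Q * R) ≤ ‖P‖ * p Q * ‖R‖) {d e : ι → 𝕜}
    (hde : ∀ i, ‖d i‖ ≤ ‖e i‖) : p (diagonal d) ≤ p (diagonal e) := by
  have hd : diagonal d = diagonal (d / e) * diagonal e * 1 := by
    rw [mul_one, diagonal_mul_diagonal]
    congr 1
    funext i
    by_cases he : e i = 0
    · simpa [he] using hde i
    · exact (div_mul_cancel₀ _ he).symm
  have h_quot : ‖diagonal (d / e)‖ ≤ 1 := by
    rw [l2_opNorm_diagonal]
    refine (pi_norm_le_iff_of_nonneg zero_le_one).2 fun i ↦ ?_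
    rw [Pi.div_apply, norm_div]
    exact div_le_one_of_le₀ (hde i) (norm_nonneg _)
  have h_one : ‖(1 : Matrix ι ι 𝕜)‖ ≤ 1 := by
    rw [← diagonal_one, l2_opNorm_diagonal]
    exact (pi_norm_le_iff_of_nonneg zero_le_one).2 fun i ↦ by simp
  calc p (diagonal d) ≤ ‖diagonal (d / e)‖ * p (diagonal e) * ‖(1 : Matrix ι ι 𝕜)‖ :=
        hd ▸ hp_mul _ _ _
    _ ≤ 1 * p (diagonal e) * 1 := by gcongr
    _ = p (diagonal e) := by ring

theorem apply_diagonal_comp_le_of_concaveOn (p : Seminorm 𝕜 (Matrix ι ι 𝕜))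
    (hp_mul : ∀ P Q R : Matrix ι ι 𝕜, p (P * Q * R) ≤ ‖P‖ * p Q * ‖R‖) {f : ℝ → ℝ}
    (hf : ConcaveOn ℝ (Ici 0) f) (hf_nonneg : ∀ x, 0 ≤ x → 0 ≤ f x) {s : ι → ℝ}
    (hs : ∀ i, 0 ≤ s i) :
    p (diagonal fun i ↦ (f (s i) : 𝕜)) ≤ p 1 * f (p (diagonal fun i ↦ (s i : 𝕜)) / p 1) := by
  set D : Matrix ι ι 𝕜 := diagonal fun i ↦ (s i : 𝕜)
  rcases (apply_nonneg p 1).eq_or_lt with h_one | h_one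
  · have := hp_mul (diagonal fun i ↦ (f (s i) : 𝕜)) 1 1
    rw [mul_one, mul_one, ← h_one, mul_zero, zero_mul] at this
    rwa [← h_one, zero_mul]
  set t := p D / p 1
  obtain ⟨b, hb, hbt, h_line⟩ := hf.exists_nonneg_supporting_slope hf_nonneg
    (div_nonneg (apply_nonneg p D) h_one.le) (Finset.univ.image s) (by simpa using hs)
  have h_affine : ((f t - b * t : ℝ) : 𝕜) • (1 : Matrix ι ι 𝕜) + (b : 𝕜) • D =
      diagonal fun i ↦ ((f t + b * (s i - t) : ℝ) : 𝕜) := by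
    ext i j
    rcases eq_or_ne i j with rfl | hij
    · simp only [Matrix.add_apply, Matrix.smul_apply, one_apply_eq, diagonal_apply_eq,
        smul_eq_mul, mul_one, D]
      push_cast
      ring
    · simp [D, hij]
  calc p (diagonal fun i ↦ (f (s i) : 𝕜))
      ≤ p (((f t - b * t : ℝ) : 𝕜) • (1 : Matrix ι ι 𝕜) + (b : 𝕜) • D) := by
        rw [h_affine]
        refine p.apply_diagonal_le_of_norm_le hp_mul fun i ↦ ?_
        have hfi := h_line (s i) (Finset.mem_image_of_mem s (Finset.mem_univ i))
        rwa [RCLike.norm_ofReal, RCLike.norm_ofReal, abs_of_nonneg (hf_nonneg _ (hs i)),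
          abs_of_nonneg ((hf_nonneg _ (hs i)).trans hfi)]
    _ ≤ (f t - b * t) * p 1 + b * p D := by
        refine (map_add_le_add p _ _).trans_eq ?_
        rw [map_smul_eq_mul, map_smul_eq_mul, RCLike.norm_ofReal, RCLike.norm_ofReal,
          abs_of_nonneg (sub_nonneg.2 hbt), abs_of_nonneg hb]
    _ = p 1 * f t := by
        simp only [t]; field_simp; ring

end Seminorm

namespace Matrix

theorem exists_mem_unitaryGroup_eq_mul_diagonal {B : Matrix ι ι 𝕜} {s : ι → ℝ}
    (hB : Bᴴ * B = diagonal fun i ↦ ((s i ^ 2 : ℝ) : 𝕜)) :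
    ∃ C ∈ unitaryGroup ι 𝕜, B = C * diagonal fun i ↦ (s i : 𝕜) := by
  let col : ι → EuclideanSpace 𝕜 ι := fun j ↦ WithLp.toLp 2 fun k ↦ B k j
  have h_inner (i j : ι) : inner 𝕜 (col i) (col j) = (Bᴴ * B) i j := by
    simp [col, PiLp.inner_apply, Matrix.mul_apply, mul_comm]
  have h_col_zero (j : ι) (hj : s j = 0) : col j = 0 := by
    rw [← inner_self_eq_zero (𝕜 := 𝕜), h_inner, hB]
    simp [hj]
  -- the rescaled nonzero columns of `B` are orthonormal; `C` completes them to a basis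
  have h_ortho : Orthonormal 𝕜 ({i | s i ≠ 0}.domRestrict fun i ↦ ((s i)⁻¹ : 𝕜) • col i) := by
    rw [orthonormal_iff_ite]
    rintro ⟨i, hi⟩ ⟨j, hj⟩
    simp only [Set.domRestrict_apply, inner_smul_left, inner_smul_right, h_inner, hB,
      diagonal_apply, Subtype.mk.injEq]
    split_ifs with hij
    · subst hij
      have : (s i : 𝕜) ≠ 0 := by exact_mod_cast hi
      simp only [map_inv₀, RCLike.conj_ofReal, map_pow]
      field_simp
    · simp
  obtain ⟨β, hβ⟩ := h_ortho.exists_orthonormalBasis_extension_of_card_eq (by simp)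
  refine ⟨(EuclideanSpace.basisFun ι 𝕜).toBasis.toMatrix β, ?_, ?_⟩
  · rw [mem_unitaryGroup_iff', star_eq_conjTranspose]
    exact OrthonormalBasis.toMatrix_orthonormalBasis_conjTranspose_mul_self _ _
  · ext k j
    rw [mul_diagonal]
    by_cases hj : s j = 0
    · simpa [hj] using congr($(h_col_zero j hj) k)
    · have : (s j : 𝕜) ≠ 0 := by exact_mod_cast hj
      rw [Module.Basis.toMatrix_apply]
      simp only [hβ j hj, map_smul, Finsupp.coe_smul, Pi.smul_apply,
        OrthonormalBasis.coe_toBasis_repr_apply, EuclideanSpace.basisFun_repr, smul_eq_mul, col]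
      field_simp

theorem PosSemidef.sqrt_eq_cfc {A : Matrix ι ι 𝕜} (hA : A.PosSemidef) :
    hA.sqrt = cfc Real.sqrt A := by
  rw [hA.1.cfc_eq, IsHermitian.cfc, Unitary.conjStarAlgAut_apply]
  rfl

/-- The singular values of `Y`, indexed along the eigenvectors of `Yᴴ * Y`. -/
noncomputable def singularValues (Y : Matrix ι ι 𝕜) : ι → ℝ :=
  fun i ↦ √((isHermitian_conjTranspose_mul_self Y).eigenvalues i)

theorem cfc_sqrt_conjTranspose_mul_self (Y : Matrix ι ι 𝕜) (f : ℝ → ℝ) :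
    cfc f (posSemidef_conjTranspose_mul_self Y).sqrt =
      (isHermitian_conjTranspose_mul_self Y).eigenvectorUnitary *
        diagonal (fun i ↦ (f (Y.singularValues i) : 𝕜)) *
        star ((isHermitian_conjTranspose_mul_self Y).eigenvectorUnitary : Matrix ι ι 𝕜) := by
  have hH := isHermitian_conjTranspose_mul_self Y
  rw [PosSemidef.sqrt_eq_cfc, ← cfc_comp f Real.sqrt _ hH.isSelfAdjoint
    ((toFinite _).continuousOn _) ((toFinite _).continuousOn _), hH.cfc_eq, IsHermitian.cfc,
    Unitary.conjStarAlgAut_apply]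
  rfl

theorem apply_eq_apply_diagonal_singularValues (N : Matrix ι ι 𝕜 → ℝ)
    (hN : ∀ U V P : Matrix ι ι 𝕜, U ∈ unitaryGroup ι 𝕜 → V ∈ unitaryGroup ι 𝕜 →
      N (U * P * V) = N P) (Y : Matrix ι ι 𝕜) :
    N Y = N (diagonal fun i ↦ (Y.singularValues i : 𝕜)) := by
  have hH := isHermitian_conjTranspose_mul_self Y
  set U : Matrix ι ι 𝕜 := (hH.eigenvectorUnitary : Matrix ι ι 𝕜)
  have hU : U ∈ unitaryGroup ι 𝕜 := hH.eigenvectorUnitary.2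
  obtain ⟨C, hC, hYU⟩ :
      ∃ C ∈ unitaryGroup ι 𝕜, Y * U = C * diagonal fun i ↦ (Y.singularValues i : 𝕜) := by
    refine exists_mem_unitaryGroup_eq_mul_diagonal ?_
    have h_diag := hH.conjStarAlgAut_star_eigenvectorUnitary
    rw [Unitary.conjStarAlgAut_star_apply] at h_diag
    calc (Y * U)ᴴ * (Y * U) = star U * (Yᴴ * Y) * U := by
          simp only [conjTranspose_mul, star_eq_conjTranspose, mul_assoc]
      _ = _ := h_diag
      _ = _ := by
          congr 1
          funext i
          have := (posSemidef_conjTranspose_mul_self Y).eigenvalues_nonneg i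
          simp [singularValues, Real.sq_sqrt this]
  calc N Y = N (Y * U * star U) := by rw [mul_assoc, mem_unitaryGroup_iff.1 hU, mul_one]
    _ = _ := by rw [hYU]; exact hN C _ _ hC (Unitary.star_mem hU)

end Matrix

theorem statement_3_general {n : ℕ}
(N : Matrix (Fin n) (Fin n) ℂ → ℝ)
    (hN_add : ∀ P Q : Matrix (Fin n) (Fin n) ℂ, N (P + Q) ≤ N P + N Q)
    (hN_smul : ∀ (c : ℂ) (P : Matrix (Fin n) (Fin n) ℂ), N (c • P) = ‖c‖ * N P)
    (hN_unitary : ∀ U V P : Matrix (Fin n) (Fin n) ℂ,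
      U ∈ Matrix.unitaryGroup (Fin n) ℂ → V ∈ Matrix.unitaryGroup (Fin n) ℂ →
      N (U * P * V) = N P)
    (hN_mul : ∀ P Q R : Matrix (Fin n) (Fin n) ℂ, N (P * Q * R) ≤ ‖P‖ * N Q * ‖R‖)
    (Y : Matrix (Fin n) (Fin n) ℂ) (f : ℝ → ℝ)
    (hf_concave : ConcaveOn ℝ (Set.Ici 0) f)
    (hf_nonneg : ∀ x : ℝ, 0 ≤ x → 0 ≤ f x) :
    N (cfc f (Matrix.posSemidef_conjTranspose_mul_self Y).sqrt) ≤
      N 1 * f (N Y / N 1) := by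
  have hU := (isHermitian_conjTranspose_mul_self Y).eigenvectorUnitary.2
  rw [cfc_sqrt_conjTranspose_mul_self, hN_unitary _ _ _ hU (Unitary.star_mem hU),
    apply_eq_apply_diagonal_singularValues N hN_unitary Y]
  exact (Seminorm.of N hN_add hN_smul).apply_diagonal_comp_le_of_concaveOn hN_mul hf_concave
    hf_nonneg fun i ↦ Real.sqrt_nonneg _

/-- For a unitarily-invariant norm `N` on `Mₙ(ℂ)`, `Y ∈ Mₙ(ℂ)`, and `f : [0,∞) → [0,∞)`
concave: `N(f(|Y|)) ≤ N(I) · f(N(Y)/N(I))`, where `|Y| = (Y*Y)^{1/2}`. -/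
theorem statement_3 {n : ℕ} (hn : 0 < n)
(N : Matrix (Fin n) (Fin n) ℂ → ℝ)
    (hN_add : ∀ P Q : Matrix (Fin n) (Fin n) ℂ, N (P + Q) ≤ N P + N Q)
    (hN_smul : ∀ (c : ℂ) (P : Matrix (Fin n) (Fin n) ℂ), N (c • P) = ‖c‖ * N P)
    (hN_defn : ∀ P : Matrix (Fin n) (Fin n) ℂ, N P = 0 ↔ P = 0)
    (hN_unitary : ∀ U V P : Matrix (Fin n) (Fin n) ℂ,
      U ∈ Matrix.unitaryGroup (Fin n) ℂ → V ∈ Matrix.unitaryGroup (Fin n) ℂ →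
      N (U * P * V) = N P)
    (hN_mul : ∀ P Q R : Matrix (Fin n) (Fin n) ℂ, N (P * Q * R) ≤ ‖P‖ * N Q * ‖R‖)
    (Y : Matrix (Fin n) (Fin n) ℂ) (f : ℝ → ℝ)
    (hf_concave : ConcaveOn ℝ (Set.Ici 0) f)
    (hf_nonneg : ∀ x : ℝ, 0 ≤ x → 0 ≤ f x) :
    N (cfc f (Matrix.posSemidef_conjTranspose_mul_self Y).sqrt) ≤
      N 1 * f (N Y / N 1) :=
  statement_3_general N hN_add hN_smul hN_unitary hN_mul Y f hf_concave hf_nonneg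
end

section
/- Let N be a unitarily-invariant norm on M_n(ℂ), let X ∈ M_n(ℂ) be Hermitian, let Y ∈ M_n(ℂ), and let k ∈ ℝ. Then N(e^{ikX}Y − Y e^{ikX}) ≤ |k| · N(XY − YX), where e^{ikX} denotes the matrix exponential of ikX. -/
open scoped ComplexOrder Matrix.Norms.L2Operator

/-!
Over the reals `N` is a seminorm, hence continuous on the finite-dimensional space `Mₙ(ℂ)`.
For `U = e^{i(k/m)X}`, which is unitary, the identity
`U^{j+1}Y - YU^{j+1} = U(U^jY - YU^j) + (UY - YU)U^j` and unitary invariance give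
`N(U^mY - YU^m) ≤ m N(UY - YU)`. Now `U^m = e^{ikX}`, while `m(UY - YU) → ik(XY - YX)` as
`m → ∞` because `t ↦ e^{itX}Y - Ye^{itX}` has derivative `i(XY - YX)` at `0`.
-/

open NormedSpace Filter Topology

theorem Seminorm.continuous_of_finiteDimensional {E : Type*} [NormedAddCommGroup E]
    [NormedSpace ℝ E] [FiniteDimensional ℝ E] (p : Seminorm ℝ E) : Continuous p := by
  simpa [continuousOn_univ] using p.convexOn.continuousOn_interior

section
variable {𝕜 R : Type*} [SeminormedRing 𝕜] [Ring R] [SMul 𝕜 R]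

theorem Seminorm.map_mul_pow_le (p : Seminorm 𝕜 R) {A : R} (hA : ∀ Z, p (Z * A) ≤ p Z)
    (Z : R) (m : ℕ) : p (Z * A ^ m) ≤ p Z := by
  induction m with
  | zero => simp
  | succ m ih => exact (pow_succ A m ▸ mul_assoc Z (A ^ m) A ▸ hA _).trans ih

theorem Seminorm.map_pow_mul_sub_mul_pow_le (p : Seminorm 𝕜 R) {A : R}
    (hl : ∀ Z, p (A * Z) ≤ p Z) (hr : ∀ Z, p (Z * A) ≤ p Z) (Y : R) (m : ℕ) :
    p (A ^ m * Y - Y * A ^ m) ≤ m * p (A * Y - Y * A) := by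
  induction m with
  | zero => simp
  | succ m ih =>
    have telescope : A ^ (m + 1) * Y - Y * A ^ (m + 1) =
        A * (A ^ m * Y - Y * A ^ m) + (A * Y - Y * A) * A ^ m := by
      rw [pow_succ']; noncomm_ring
    calc p (A ^ (m + 1) * Y - Y * A ^ (m + 1))
        ≤ p (A ^ m * Y - Y * A ^ m) + p (A * Y - Y * A) := by
          rw [telescope]
          exact (map_add_le_add p _ _).trans (add_le_add (hl _) (p.map_mul_pow_le hr _ m))
      _ ≤ (m + 1 : ℕ) * p (A * Y - Y * A) := by push_cast; linarith
end

theorem tendsto_div_natCast_nhdsNE_zero {k : ℝ} (hk : k ≠ 0) :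
    Tendsto (fun m : ℕ => k / m) atTop (𝓝[≠] 0) :=
  tendsto_nhdsWithin_of_tendsto_nhds_of_eventually_within _
    (tendsto_const_div_atTop_nhds_zero_nat k)
    (by filter_upwards [eventually_ne_atTop 0] with m hm using div_ne_zero hk (by simpa))

section
variable {𝔸 : Type*} [NormedRing 𝔸] [NormedAlgebra ℝ 𝔸] [CompleteSpace 𝔸]

theorem Seminorm.map_exp_smul_mul_sub_le (p : Seminorm ℝ 𝔸) (hp : Continuous p) {B : 𝔸}
    (hl : ∀ (t : ℝ) Z, p (exp (t • B) * Z) ≤ p Z) (hr : ∀ (t : ℝ) Z, p (Z * exp (t • B)) ≤ p Z)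
    (Y : 𝔸) (k : ℝ) :
    p (exp (k • B) * Y - Y * exp (k • B)) ≤ |k| * p (B * Y - Y * B) := by
  let +nondep : NormedAlgebra ℚ 𝔸 := .restrictScalars ℚ ℝ 𝔸
  rcases eq_or_ne k 0 with rfl | hk
  · simp
  set g : ℝ → 𝔸 := fun t => exp (t • B) * Y - Y * exp (t • B)
  have hg : HasDerivAt g (B * Y - Y * B) 0 := by
    have h := hasDerivAt_exp_smul_const (𝕂 := ℝ) B 0
    rw [zero_smul, exp_zero, one_mul] at h
    exact (h.mul_const Y).sub (h.const_mul Y)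
  have hslope : Tendsto (fun m : ℕ => k • slope g 0 (k / m)) atTop
      (𝓝 (k • (B * Y - Y * B))) :=
    ((hasDerivAt_iff_tendsto_slope.mp hg).comp (tendsto_div_natCast_nhdsNE_zero hk)).const_smul k
  have hbound : ∀ᶠ m : ℕ in atTop, p (g k) ≤ p (k • slope g 0 (k / m)) := by
    filter_upwards [eventually_ne_atTop 0] with m hm
    have hm' : (m : ℝ) ≠ 0 := Nat.cast_ne_zero.mpr hm
    have hpow : exp (k • B) = exp ((k / m) • B) ^ m := by
      rw [← exp_nsmul, ← Nat.cast_smul_eq_nsmul ℝ, smul_smul, mul_div_cancel₀ _ hm']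
    have hslope_eq : k • slope g 0 (k / m) = (m : ℝ) • g (k / m) := by
      simp only [slope_def_module, g, sub_zero, zero_smul, exp_zero, one_mul, mul_one, sub_self,
        smul_smul]
      congr 1
      field_simp
    calc p (g k) = p (exp ((k / m) • B) ^ m * Y - Y * exp ((k / m) • B) ^ m) := by
          simp only [g, hpow]
      _ ≤ m * p (g (k / m)) := p.map_pow_mul_sub_mul_pow_le (hl _) (hr _) Y m
      _ = p (k • slope g 0 (k / m)) := by
          rw [hslope_eq, map_smul_eq_mul, Real.norm_natCast]
  simpa only [map_smul_eq_mul, Real.norm_eq_abs] using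
    ge_of_tendsto ((hp.tendsto _).comp hslope) hbound

end

theorem IsSelfAdjoint.exp_real_smul_I_smul_mem_unitary {𝔸 : Type*} [NormedRing 𝔸]
    [NormedAlgebra ℂ 𝔸] [CompleteSpace 𝔸] [StarRing 𝔸] [ContinuousStar 𝔸] [StarModule ℂ 𝔸]
    {X : 𝔸} (hX : IsSelfAdjoint X) (t : ℝ) :
    NormedSpace.exp (t • (Complex.I • X)) ∈ unitary 𝔸 := by
  let +nondep : NormedAlgebra ℚ 𝔸 := .restrictScalars ℚ ℂ 𝔸
  refine exp_mem_unitary_of_mem_skewAdjoint (skewAdjoint.smul_mem t ?_)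
  rw [skewAdjoint.mem_iff, star_smul, hX.star_eq, Complex.star_def, Complex.conj_I, neg_smul]

theorem statement_8_general {n : ℕ}
(N : Matrix (Fin n) (Fin n) ℂ → ℝ)
    (hN_add : ∀ P Q : Matrix (Fin n) (Fin n) ℂ, N (P + Q) ≤ N P + N Q)
    (hN_smul : ∀ (c : ℂ) (P : Matrix (Fin n) (Fin n) ℂ), N (c • P) = ‖c‖ * N P)
    (hN_unitary : ∀ U V P : Matrix (Fin n) (Fin n) ℂ,
      U ∈ Matrix.unitaryGroup (Fin n) ℂ → V ∈ Matrix.unitaryGroup (Fin n) ℂ →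
      N (U * P * V) = N P)
    (X Y : Matrix (Fin n) (Fin n) ℂ) (hX : X.IsHermitian) (k : ℝ) :
    N (NormedSpace.exp ((Complex.I * (k : ℂ)) • X) * Y -
        Y * NormedSpace.exp ((Complex.I * (k : ℂ)) • X)) ≤
      |k| * N (X * Y - Y * X) := by
  let p : Seminorm ℝ (Matrix (Fin n) (Fin n) ℂ) := (Seminorm.of N hN_add hN_smul).restrictScalars ℝ
  have hp : ∀ P, p P = N P := fun _ => rfl
  have hU := hX.isSelfAdjoint.exp_real_smul_I_smul_mem_unitary
  have key := p.map_exp_smul_mul_sub_le p.continuous_of_finiteDimensional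
    (fun t Z => by simpa [hp] using (hN_unitary _ 1 Z (hU t) (one_mem _)).le)
    (fun t Z => by simpa [hp] using (hN_unitary 1 _ Z (one_mem _) (hU t)).le) Y k
  have hexp : (Complex.I * (k : ℂ)) • X = k • (Complex.I • X) := by
    rw [mul_comm, mul_smul, Complex.coe_smul]
  have hcomm : Complex.I • X * Y - Y * (Complex.I • X) = Complex.I • (X * Y - Y * X) := by
    rw [smul_sub, smul_mul_assoc, mul_smul_comm]
  rw [hexp]
  calc _ ≤ |k| * p (Complex.I • X * Y - Y * (Complex.I • X)) := key
    _ = |k| * N (X * Y - Y * X) := by rw [hcomm, hp, hN_smul, Complex.norm_I, one_mul]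

/-- For a unitarily-invariant norm `N` on `Mₙ(ℂ)`, `X` Hermitian, `Y`, and `k ∈ ℝ`:
`N(e^{ikX}Y − Ye^{ikX}) ≤ |k| · N(XY − YX)`. -/
theorem statement_8 {n : ℕ} (hn : 0 < n)
(N : Matrix (Fin n) (Fin n) ℂ → ℝ)
    (hN_add : ∀ P Q : Matrix (Fin n) (Fin n) ℂ, N (P + Q) ≤ N P + N Q)
    (hN_smul : ∀ (c : ℂ) (P : Matrix (Fin n) (Fin n) ℂ), N (c • P) = ‖c‖ * N P)
    (hN_defn : ∀ P : Matrix (Fin n) (Fin n) ℂ, N P = 0 ↔ P = 0)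
    (hN_unitary : ∀ U V P : Matrix (Fin n) (Fin n) ℂ,
      U ∈ Matrix.unitaryGroup (Fin n) ℂ → V ∈ Matrix.unitaryGroup (Fin n) ℂ →
      N (U * P * V) = N P)
    (hN_mul : ∀ P Q R : Matrix (Fin n) (Fin n) ℂ, N (P * Q * R) ≤ ‖P‖ * N Q * ‖R‖)
    (X Y : Matrix (Fin n) (Fin n) ℂ) (hX : X.IsHermitian) (k : ℝ) :
    N (NormedSpace.exp ((Complex.I * (k : ℂ)) • X) * Y -
        Y * NormedSpace.exp ((Complex.I * (k : ℂ)) • X)) ≤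
      |k| * N (X * Y - Y * X) :=
  statement_8_general N hN_add hN_smul hN_unitary X Y hX k
end

section
/- Let f₁(x) = x/(x+1), let N be a unitarily-invariant norm on M_n(ℂ), and fix c > 0 and C ≥ 1. Suppose that N(f₁(A)X − Xf₁(A)) ≤ C · f₁(c) for all A, X ∈ M_n(ℂ) with A positive semidefinite, N(X) ≤ 1, and N(AX − XA) = c. Then for every d > c and all A, X ∈ M_n(ℂ) with A positive semidefinite, N(X) ≤ 1, and N(AX − XA) = d: N(f₁(A)X − Xf₁(A)) ≤ C · ((d+1)/(c+1)) · f₁(d). -/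
/-!
Write `e = (a + 1)⁻¹`, so that `f₁(a) = 1 - e` and `[f₁(a), x] = e [a, x] e`. Replacing `a`
by `r a` with `r = c / d` scales `[a, x]` by `r`, so the hypothesis applies to `r a`; moreover
`e = m (r a + 1)⁻¹` with `m = (r a + 1) / (a + 1)` commuting with `a` and `‖m‖ ≤ 1` because
`r ≤ 1`. Hence `[f₁(a), x] = r⁻¹ m [f₁(r a), x] m`, and the ideal property of `N` gives the
bound `(d / c) · C f₁(c) = C (d + 1) / (c + 1) · f₁(d)`.
-/

open scoped ComplexOrder Matrix.Norms.L2Operator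
open scoped MatrixOrder

lemma commutator_one_sub_eq_of_mul_add_one_eq_one {R : Type*} [Ring R] {a e : R} (x : R)
    (he : e * (a + 1) = 1) (he' : (a + 1) * e = 1) :
    (1 - e) * x - x * (1 - e) = e * (a * x - x * a) * e := by
  calc (1 - e) * x - x * (1 - e) = (e * (a + 1)) * x * e - e * x * ((a + 1) * e) := by
        rw [he, he']; noncomm_ring
    _ = e * (a * x - x * a) * e := by noncomm_ring

lemma smul_mul_sub_mul_smul {R A : Type*} [CommSemiring R] [Ring A] [Algebra R A]
    (r : R) (a x : A) : r • a * x - x * r • a = r • (a * x - x * a) := by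
  rw [smul_mul_assoc, mul_smul_comm, smul_sub]

lemma nonneg_of_subadditive_of_homogeneous {𝕜 E : Type*} [NormedField 𝕜] [AddCommGroup E]
    [Module 𝕜 E] {N : E → ℝ} (hN_add : ∀ P Q, N (P + Q) ≤ N P + N Q)
    (hN_smul : ∀ (c : 𝕜) P, N (c • P) = ‖c‖ * N P) (P : E) : 0 ≤ N P := by
  have hzero : N 0 = 0 := by simpa using hN_smul 0 0
  have hneg : N (-P) = N P := by simpa using hN_smul (-1) P
  have := hN_add P (-P)
  rw [add_neg_cancel, hzero, hneg] at this
  linarith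

section CStarAlgebra

variable {A : Type*} [CStarAlgebra A] [PartialOrder A] [StarOrderedRing A] {a : A}

lemma continuousOn_inv_mul_add_one {r : ℝ} (hr : 0 ≤ r) :
    ContinuousOn (fun t => (r * t + 1)⁻¹) (Set.Ici 0) :=
  ContinuousOn.inv₀ (by fun_prop) fun t (ht : 0 ≤ t) => by positivity

lemma cfc_div_add_one_commutator (ha : 0 ≤ a) (x : A) :
    cfc (fun t : ℝ => t / (t + 1)) a * x - x * cfc (fun t : ℝ => t / (t + 1)) a =
      cfc (fun t : ℝ => (t + 1)⁻¹) a * (a * x - x * a) * cfc (fun t : ℝ => (t + 1)⁻¹) a := by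
  have hspec := spectrum_nonneg_of_nonneg (𝕜 := ℝ) ha
  have hcont : ContinuousOn (fun t : ℝ => (t + 1)⁻¹) (spectrum ℝ a) := by
    simpa using (continuousOn_inv_mul_add_one zero_le_one).mono fun _ ht => hspec ht
  have hf₁ : cfc (fun t : ℝ => t / (t + 1)) a = 1 - cfc (fun t : ℝ => (t + 1)⁻¹) a := by
    rw [← cfc_const_one ℝ a, ← cfc_sub (fun _ => (1 : ℝ)) (fun t : ℝ => (t + 1)⁻¹) a]
    refine cfc_congr fun t ht => ?_
    have := hspec ht
    field_simp
    ring
  have hadd : a + 1 = cfc (fun t : ℝ => t + 1) a := by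
    rw [cfc_add .., cfc_id' .., cfc_const_one ..]
  rw [hf₁]
  apply commutator_one_sub_eq_of_mul_add_one_eq_one
  all_goals
    rw [hadd, ← cfc_mul .., ← cfc_const_one ℝ a]
    refine cfc_congr fun t ht => ?_
    have := hspec ht
    field_simp

lemma cfc_div_add_one_commutator_eq_smul (ha : 0 ≤ a) {r : ℝ} (hr : 0 < r) (x : A) :
    cfc (fun t : ℝ => t / (t + 1)) a * x - x * cfc (fun t : ℝ => t / (t + 1)) a =
      r⁻¹ • (cfc (fun t : ℝ => (r * t + 1) / (t + 1)) a *
        (cfc (fun t : ℝ => t / (t + 1)) (r • a) * x - x * cfc (fun t : ℝ => t / (t + 1)) (r • a)) *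
          cfc (fun t : ℝ => (r * t + 1) / (t + 1)) a) := by
  have hspec := spectrum_nonneg_of_nonneg (𝕜 := ℝ) ha
  have hcont : ContinuousOn (fun t : ℝ => (r * t + 1)⁻¹) (spectrum ℝ a) :=
    (continuousOn_inv_mul_add_one hr.le).mono fun _ ht => hspec ht
  have hscaled : cfc (fun t : ℝ => (t + 1)⁻¹) (r • a) = cfc (fun t : ℝ => (r * t + 1)⁻¹) a := by
    refine (cfc_comp_smul r (fun t : ℝ => (t + 1)⁻¹) a ?_).symm
    simpa using (continuousOn_inv_mul_add_one zero_le_one).mono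
      (Set.image_subset_iff.mpr fun t ht => mul_nonneg hr.le (hspec ht))
  have hcancel :
      cfc (fun t : ℝ => (r * t + 1) / (t + 1)) a * cfc (fun t : ℝ => (r * t + 1)⁻¹) a =
        cfc (fun t : ℝ => (t + 1)⁻¹) a := by
    rw [← cfc_mul _ _ a ?_]
    · refine cfc_congr fun t ht => ?_
      have := hspec ht
      field_simp
    · exact ContinuousOn.div (by fun_prop) (by fun_prop) fun t ht => by
        have := hspec ht; positivity
  have hcancel' :
      cfc (fun t : ℝ => (r * t + 1)⁻¹) a * cfc (fun t : ℝ => (r * t + 1) / (t + 1)) a =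
        cfc (fun t : ℝ => (t + 1)⁻¹) a := by
    rw [← (cfc_commute_cfc _ _ a).eq, hcancel]
  rw [cfc_div_add_one_commutator ha, cfc_div_add_one_commutator (smul_nonneg hr.le ha), hscaled,
    smul_mul_sub_mul_smul, mul_smul_comm, smul_mul_assoc, mul_smul_comm, smul_mul_assoc,
    inv_smul_smul₀ hr.ne']
  -- split the left factor `(a + 1)⁻¹` as `m (r a + 1)⁻¹` and the right one as `(r a + 1)⁻¹ m`
  nth_rewrite 1 [← hcancel]
  rw [← hcancel']
  noncomm_ring

lemma norm_cfc_mul_add_one_div_add_one_le_one (ha : 0 ≤ a) {r : ℝ} (hr₀ : 0 ≤ r) (hr₁ : r ≤ 1) :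
    ‖cfc (fun t : ℝ => (r * t + 1) / (t + 1)) a‖ ≤ 1 := by
  refine norm_cfc_le zero_le_one fun t ht => ?_
  have := spectrum_nonneg_of_nonneg (𝕜 := ℝ) ha ht
  rw [Real.norm_of_nonneg (by positivity), div_le_one (by positivity)]
  nlinarith

end CStarAlgebra

theorem statement_12_general {n : ℕ}
(N : Matrix (Fin n) (Fin n) ℂ → ℝ)
    (hN_add : ∀ P Q : Matrix (Fin n) (Fin n) ℂ, N (P + Q) ≤ N P + N Q)
    (hN_smul : ∀ (c : ℂ) (P : Matrix (Fin n) (Fin n) ℂ), N (c • P) = ‖c‖ * N P)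
    (hN_mul : ∀ P Q R : Matrix (Fin n) (Fin n) ℂ, N (P * Q * R) ≤ ‖P‖ * N Q * ‖R‖)
    (c C : ℝ) (hc : 0 < c)
    (hyp : ∀ A X : Matrix (Fin n) (Fin n) ℂ, A.PosSemidef → N X ≤ 1 →
      N (A * X - X * A) = c →
      N (cfc (fun x : ℝ => x / (x + 1)) A * X - X * cfc (fun x : ℝ => x / (x + 1)) A) ≤
        C * (c / (c + 1))) :
    ∀ d : ℝ, c < d → ∀ A X : Matrix (Fin n) (Fin n) ℂ, A.PosSemidef → N X ≤ 1 →
      N (A * X - X * A) = d →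
      N (cfc (fun x : ℝ => x / (x + 1)) A * X - X * cfc (fun x : ℝ => x / (x + 1)) A) ≤
        C * ((d + 1) / (c + 1)) * (d / (d + 1)) := by
  intro d hd A X hA hX hAX
  have hd₀ : 0 < d := hc.trans hd
  set r := c / d
  have hr₀ : 0 < r := div_pos hc hd₀
  have hN_real_smul (s : ℝ) (P : Matrix (Fin n) (Fin n) ℂ) : N (s • P) = |s| * N P := by
    rw [← Complex.coe_smul, hN_smul, Complex.norm_real, Real.norm_eq_abs]
  have hscaled := hyp (r • A) X (hA.smul hr₀.le) hX (by
    rw [smul_mul_sub_mul_smul, hN_real_smul, hAX, abs_of_pos hr₀, div_mul_cancel₀ _ hd₀.ne'])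
  have hM :=
    norm_cfc_mul_add_one_div_add_one_le_one hA.nonneg hr₀.le ((div_le_one hd₀).mpr hd.le)
  set M := cfc (fun t : ℝ => (r * t + 1) / (t + 1)) A
  set Y :=
    cfc (fun x : ℝ => x / (x + 1)) (r • A) * X - X * cfc (fun x : ℝ => x / (x + 1)) (r • A)
  rw [cfc_div_add_one_commutator_eq_smul hA.nonneg hr₀ X]
  have hY := nonneg_of_subadditive_of_homogeneous hN_add hN_smul Y
  calc N (r⁻¹ • (M * Y * M)) = r⁻¹ * N (M * Y * M) := by
        rw [hN_real_smul, abs_of_pos (inv_pos.mpr hr₀)]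
    _ ≤ r⁻¹ * (1 * N Y * 1) := by
        gcongr
        exact (hN_mul M Y M).trans (by gcongr)
    _ ≤ r⁻¹ * (C * (c / (c + 1))) := by rw [one_mul, mul_one]; gcongr
    _ = C * ((d + 1) / (c + 1)) * (d / (d + 1)) := by
        simp only [r]
        field_simp

/-- Let `f₁(x) = x/(x+1)`, `c > 0`, `C ≥ 1`. If `N(f₁(A)X − Xf₁(A)) ≤ C·f₁(c)` whenever
`A` is psd, `N(X) ≤ 1`, `N(AX − XA) = c`, then for every `d > c` and `A, X` with `A` psd,
`N(X) ≤ 1`, `N(AX − XA) = d`: `N(f₁(A)X − Xf₁(A)) ≤ C·((d+1)/(c+1))·f₁(d)`. -/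
theorem statement_12 {n : ℕ} (hn : 0 < n)
(N : Matrix (Fin n) (Fin n) ℂ → ℝ)
    (hN_add : ∀ P Q : Matrix (Fin n) (Fin n) ℂ, N (P + Q) ≤ N P + N Q)
    (hN_smul : ∀ (c : ℂ) (P : Matrix (Fin n) (Fin n) ℂ), N (c • P) = ‖c‖ * N P)
    (hN_defn : ∀ P : Matrix (Fin n) (Fin n) ℂ, N P = 0 ↔ P = 0)
    (hN_unitary : ∀ U V P : Matrix (Fin n) (Fin n) ℂ,
      U ∈ Matrix.unitaryGroup (Fin n) ℂ → V ∈ Matrix.unitaryGroup (Fin n) ℂ →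
      N (U * P * V) = N P)
    (hN_mul : ∀ P Q R : Matrix (Fin n) (Fin n) ℂ, N (P * Q * R) ≤ ‖P‖ * N Q * ‖R‖)
    (c C : ℝ) (hc : 0 < c) (hC : 1 ≤ C)
    (hyp : ∀ A X : Matrix (Fin n) (Fin n) ℂ, A.PosSemidef → N X ≤ 1 →
      N (A * X - X * A) = c →
      N (cfc (fun x : ℝ => x / (x + 1)) A * X - X * cfc (fun x : ℝ => x / (x + 1)) A) ≤
        C * (c / (c + 1))) :
    ∀ d : ℝ, c < d → ∀ A X : Matrix (Fin n) (Fin n) ℂ, A.PosSemidef → N X ≤ 1 →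
      N (A * X - X * A) = d →
      N (cfc (fun x : ℝ => x / (x + 1)) A * X - X * cfc (fun x : ℝ => x / (x + 1)) A) ≤
        C * ((d + 1) / (c + 1)) * (d / (d + 1)) :=
  statement_12_general N hN_add hN_smul hN_mul c C hc hyp
end

section
/- Let f₁(x) = x/(x+1), let N be a unitarily-invariant norm on M_n(ℂ), let A ∈ M_n(ℂ) be positive semidefinite, let X ∈ M_n(ℂ) with N(X) ≤ 1, and set c = N(AX − XA). If c < 1/2 then N(f₁(A)X − Xf₁(A)) ≤ c, and if c ≥ 1/2 then N(f₁(A)X − Xf₁(A)) ≤ 1 − 1/(4c). -/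
open scoped ComplexOrder Matrix.Norms.L2Operator

/-!
For `μ > 0` put `R = (a + μ)⁻¹`. Then `a / (a + μ) = 1 - μ R` and `R X - X R = -R (a X - X a) R`,
so the commutator of `a / (a + μ)` with `X` has norm at most `μ ‖R‖² N(aX - Xa) ≤ N(aX - Xa) / μ`.
Write `a / (a + 1) = a / (a + t²) + g(a)`. On `[0, ∞)` the function `g` takes values in
`[0, (t - 1) / (t + 1)]` (its maximum is at `x = t`), so after subtracting the midpoint of that
interval, `N(g(a) X - X g(a)) ≤ (t - 1) / (t + 1) · N(X)`. Take `t = 1` when `c < 1/2` and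
`t = 2c` otherwise.
-/

lemma mul_sub_mul_eq_of_mul_eq_one {R : Type*} [Ring R] {r b : R} (hrb : r * b = 1)
    (hbr : b * r = 1) (x : R) : r * x - x * r = r * (x * b - b * x) * r :=
  calc r * x - x * r = r * x * (b * r) - (r * b) * x * r := by rw [hbr, hrb, mul_one, one_mul]
    _ = r * (x * b - b * x) * r := by noncomm_ring

lemma div_add_sq_le_div_add_one {x t : ℝ} (hx : 0 ≤ x) (ht : 1 ≤ t) :
    x / (x + t ^ 2) ≤ x / (x + 1) :=
  div_le_div_of_nonneg_left hx (by linarith) (by nlinarith)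

lemma div_add_one_sub_div_add_sq_le {x t : ℝ} (hx : 0 ≤ x) (ht : 1 ≤ t) :
    x / (x + 1) - x / (x + t ^ 2) ≤ (t - 1) / (t + 1) := by
  rw [div_sub_div _ _ (by linarith) (by nlinarith), div_le_div_iff₀ (by nlinarith) (by linarith)]
  nlinarith [mul_nonneg (by linarith : 0 ≤ t - 1) (sq_nonneg (x - t))]

lemma div_sq_add_div_le_one_sub_inv {c : ℝ} (hc : 1 / 2 ≤ c) :
    c / (2 * c) ^ 2 + (2 * c - 1) / (2 * c + 1) ≤ 1 - 1 / (4 * c) := by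
  have hc0 : 0 < c := by linarith
  rw [← sub_nonneg]
  have key : 1 - 1 / (4 * c) - (c / (2 * c) ^ 2 + (2 * c - 1) / (2 * c + 1))
      = (2 * c - 1) / (2 * c * (2 * c + 1)) := by
    field_simp
    ring
  rw [key]
  exact div_nonneg (by linarith) (by positivity)

section CStarAlgebra

variable {𝒜 : Type*} [CStarAlgebra 𝒜]

lemma Seminorm.map_commutator_le (p : Seminorm ℂ 𝒜)
    (hp : ∀ P Q R : 𝒜, p (P * Q * R) ≤ ‖P‖ * p Q * ‖R‖) (G X : 𝒜) (m : ℝ) :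
    p (G * X - X * G) ≤ 2 * ‖G - algebraMap ℝ 𝒜 m‖ * p X := by
  obtain _ | _ := subsingleton_or_nontrivial 𝒜
  · rw [Subsingleton.elim (G * X - X * G) 0, map_zero]
    positivity
  set H := G - algebraMap ℝ 𝒜 m
  have hcomm : G * X - X * G = H * X * 1 - 1 * X * H := by
    simp only [H, sub_mul, mul_sub, mul_one, one_mul, Algebra.commutes]
    abel
  calc p (G * X - X * G) ≤ p (H * X * 1) + p (1 * X * H) := hcomm ▸ map_sub_le_add p _ _
    _ ≤ ‖H‖ * p X * ‖(1 : 𝒜)‖ + ‖(1 : 𝒜)‖ * p X * ‖H‖ := add_le_add (hp _ _ _) (hp _ _ _)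
    _ = 2 * ‖H‖ * p X := by rw [CStarRing.norm_one]; ring

variable {a : 𝒜} {μ : ℝ}

lemma cfc_inv_add_const_mul_eq_one (ha : IsSelfAdjoint a) (hμ : ∀ x ∈ spectrum ℝ a, x + μ ≠ 0) :
    cfc (fun x : ℝ => (x + μ)⁻¹) a * (a + algebraMap ℝ 𝒜 μ) = 1 ∧
      (a + algebraMap ℝ 𝒜 μ) * cfc (fun x : ℝ => (x + μ)⁻¹) a = 1 := by
  have hcont : ContinuousOn (fun x : ℝ => (x + μ)⁻¹) (spectrum ℝ a) :=
    (continuous_add_const μ).continuousOn.inv₀ hμ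
  have hadd : a + algebraMap ℝ 𝒜 μ = cfc (fun x : ℝ => x + μ) a := by
    rw [cfc_add_const μ (fun x : ℝ => x) a, cfc_id' ℝ a]
  have hcont' : ContinuousOn (fun x : ℝ => x + μ) (spectrum ℝ a) :=
    (continuous_add_const μ).continuousOn
  rw [hadd, ← cfc_mul _ _ a hcont hcont', ← cfc_mul _ _ a hcont' hcont, ← cfc_one ℝ a]
  exact ⟨cfc_congr fun x hx => inv_mul_cancel₀ (hμ x hx),
    cfc_congr fun x hx => mul_inv_cancel₀ (hμ x hx)⟩

lemma cfc_div_add_const_eq (ha : IsSelfAdjoint a) (hμ : ∀ x ∈ spectrum ℝ a, x + μ ≠ 0) :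
    cfc (fun x : ℝ => x / (x + μ)) a = 1 - μ • cfc (fun x : ℝ => (x + μ)⁻¹) a := by
  have hcont : ContinuousOn (fun x : ℝ => (x + μ)⁻¹) (spectrum ℝ a) :=
    (continuous_add_const μ).continuousOn.inv₀ hμ
  rw [← cfc_smul μ _ a hcont, ← cfc_const_one ℝ a,
    ← cfc_sub (fun _ : ℝ => 1) (fun x : ℝ => μ • (x + μ)⁻¹) a continuousOn_const
      (hcont.const_smul μ)]
  refine cfc_congr fun x hx => ?_
  rw [smul_eq_mul]
  field_simp [hμ x hx]
  ring

lemma Seminorm.map_commutator_cfc_div_add_const_le (p : Seminorm ℂ 𝒜)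
    (hp : ∀ P Q R : 𝒜, p (P * Q * R) ≤ ‖P‖ * p Q * ‖R‖) (ha : IsSelfAdjoint a)
    (ha_nonneg : ∀ x ∈ spectrum ℝ a, 0 ≤ x) (hμ : 0 < μ) (X : 𝒜) :
    p (cfc (fun x : ℝ => x / (x + μ)) a * X - X * cfc (fun x : ℝ => x / (x + μ)) a)
      ≤ p (a * X - X * a) / μ := by
  have hpos : ∀ x ∈ spectrum ℝ a, 0 < x + μ := fun x hx => by linarith [ha_nonneg x hx]
  have hne : ∀ x ∈ spectrum ℝ a, x + μ ≠ 0 := fun x hx => (hpos x hx).ne'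
  obtain ⟨hRB, hBR⟩ := cfc_inv_add_const_mul_eq_one ha hne
  set R := cfc (fun x : ℝ => (x + μ)⁻¹) a
  set B := a + algebraMap ℝ 𝒜 μ
  have hR : ‖R‖ ≤ μ⁻¹ := norm_cfc_le (by positivity) fun x hx => by
    rw [Real.norm_of_nonneg (inv_nonneg.2 (hpos x hx).le)]
    exact inv_anti₀ hμ (by linarith [ha_nonneg x hx])
  have hXB : X * B - B * X = -(a * X - X * a) := by
    simp only [B, mul_add, add_mul, Algebra.commutes]
    abel
  have hcomm : cfc (fun x : ℝ => x / (x + μ)) a * X - X * cfc (fun x : ℝ => x / (x + μ)) a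
      = (μ : ℂ) • (R * (a * X - X * a) * R) :=
    calc _ = -(μ • (R * X - X * R)) := by
          rw [cfc_div_add_const_eq ha hne]
          simp only [sub_mul, mul_sub, one_mul, mul_one, smul_mul_assoc, mul_smul_comm, smul_sub]
          abel
      _ = (μ : ℂ) • (R * (a * X - X * a) * R) := by
          rw [mul_sub_mul_eq_of_mul_eq_one hRB hBR X, hXB, Complex.coe_smul]
          simp only [mul_neg, neg_mul, smul_neg, neg_neg]
  calc _ = μ * p (R * (a * X - X * a) * R) := by
        rw [hcomm, map_smul_eq_mul, Complex.norm_real, Real.norm_of_nonneg hμ.le]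
    _ ≤ μ * (‖R‖ * p (a * X - X * a) * ‖R‖) := by gcongr; exact hp _ _ _
    _ ≤ μ * (μ⁻¹ * p (a * X - X * a) * μ⁻¹) := by gcongr
    _ = p (a * X - X * a) / μ := by field_simp

lemma Seminorm.map_commutator_cfc_div_add_one_le (p : Seminorm ℂ 𝒜)
    (hp : ∀ P Q R : 𝒜, p (P * Q * R) ≤ ‖P‖ * p Q * ‖R‖) (ha : IsSelfAdjoint a)
    (ha_nonneg : ∀ x ∈ spectrum ℝ a, 0 ≤ x) {t : ℝ} (ht : 1 ≤ t) (X : 𝒜) :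
    p (cfc (fun x : ℝ => x / (x + 1)) a * X - X * cfc (fun x : ℝ => x / (x + 1)) a)
      ≤ p (a * X - X * a) / t ^ 2 + (t - 1) / (t + 1) * p X := by
  have hcont : ∀ ν : ℝ, 0 < ν → ContinuousOn (fun x : ℝ => x / (x + ν)) (spectrum ℝ a) :=
    fun ν hν => continuousOn_id.div (continuous_add_const ν).continuousOn
      fun x hx => by linarith [ha_nonneg x hx]
  set F := cfc (fun x : ℝ => x / (x + 1)) a
  set G := cfc (fun x : ℝ => x / (x + t ^ 2)) a
  set m := (t - 1) / (t + 1) / 2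
  have hm : 2 * m = (t - 1) / (t + 1) := by simp only [m]; ring
  have hmid : ‖F - G - algebraMap ℝ 𝒜 m‖ ≤ m := by
    have hF := hcont 1 one_pos
    have hG := hcont (t ^ 2) (by positivity)
    rw [← cfc_sub _ _ a hF hG, ← cfc_const m a,
      ← cfc_sub (fun x : ℝ => x / (x + 1) - x / (x + t ^ 2)) _ a (hF.sub hG) continuousOn_const]
    refine norm_cfc_le (by positivity) fun x hx => ?_
    have hlow := div_add_sq_le_div_add_one (ha_nonneg x hx) ht
    have hupp := div_add_one_sub_div_add_sq_le (ha_nonneg x hx) ht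
    rw [Real.norm_eq_abs, abs_le]
    constructor <;> linarith
  have hsplit : F * X - X * F = (G * X - X * G) + ((F - G) * X - X * (F - G)) := by noncomm_ring
  calc p (F * X - X * F) ≤ p (G * X - X * G) + p ((F - G) * X - X * (F - G)) :=
        hsplit ▸ map_add_le_add p _ _
    _ ≤ p (a * X - X * a) / t ^ 2 + 2 * ‖F - G - algebraMap ℝ 𝒜 m‖ * p X :=
        add_le_add (p.map_commutator_cfc_div_add_const_le hp ha ha_nonneg (by positivity) X)
          (p.map_commutator_le hp _ X m)
    _ ≤ p (a * X - X * a) / t ^ 2 + 2 * m * p X := by gcongr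
    _ = p (a * X - X * a) / t ^ 2 + (t - 1) / (t + 1) * p X := by rw [hm]

end CStarAlgebra

lemma Matrix.PosSemidef.spectrum_real_nonneg {ι 𝕜 : Type*} [Fintype ι] [DecidableEq ι] [RCLike 𝕜]
    {A : Matrix ι ι 𝕜} (hA : A.PosSemidef) : ∀ x ∈ spectrum ℝ A, 0 ≤ x := by
  rw [hA.isHermitian.spectrum_real_eq_range_eigenvalues]
  rintro - ⟨i, rfl⟩
  exact hA.eigenvalues_nonneg i

theorem statement_13_general {n : ℕ}
(N : Matrix (Fin n) (Fin n) ℂ → ℝ)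
    (hN_add : ∀ P Q : Matrix (Fin n) (Fin n) ℂ, N (P + Q) ≤ N P + N Q)
    (hN_smul : ∀ (c : ℂ) (P : Matrix (Fin n) (Fin n) ℂ), N (c • P) = ‖c‖ * N P)
    (hN_mul : ∀ P Q R : Matrix (Fin n) (Fin n) ℂ, N (P * Q * R) ≤ ‖P‖ * N Q * ‖R‖)
    (A X : Matrix (Fin n) (Fin n) ℂ) (hA : A.PosSemidef) (hX : N X ≤ 1) :
    (N (A * X - X * A) < 1 / 2 →
      N (cfc (fun x : ℝ => x / (x + 1)) A * X - X * cfc (fun x : ℝ => x / (x + 1)) A) ≤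
        N (A * X - X * A)) ∧
    (1 / 2 ≤ N (A * X - X * A) →
      N (cfc (fun x : ℝ => x / (x + 1)) A * X - X * cfc (fun x : ℝ => x / (x + 1)) A) ≤
        1 - 1 / (4 * N (A * X - X * A))) := by
  set c := N (A * X - X * A)
  have hbound (t : ℝ) (ht : 1 ≤ t) :
      N (cfc (fun x : ℝ => x / (x + 1)) A * X - X * cfc (fun x : ℝ => x / (x + 1)) A)
        ≤ c / t ^ 2 + (t - 1) / (t + 1) * N X :=
    (Seminorm.of N hN_add hN_smul).map_commutator_cfc_div_add_one_le hN_mul hA.isHermitian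
      hA.spectrum_real_nonneg ht X
  refine ⟨fun _ => by simpa using hbound 1 le_rfl, fun hc => ?_⟩
  calc _ ≤ c / (2 * c) ^ 2 + (2 * c - 1) / (2 * c + 1) * N X := hbound (2 * c) (by linarith)
    _ ≤ c / (2 * c) ^ 2 + (2 * c - 1) / (2 * c + 1) := by
        gcongr
        exact mul_le_of_le_one_right (div_nonneg (by linarith) (by linarith)) hX
    _ ≤ 1 - 1 / (4 * c) := div_sq_add_div_le_one_sub_inv hc

/-- Let `f₁(x) = x/(x+1)`, `A` psd, `N(X) ≤ 1`, `c = N(AX − XA)`. If `c < 1/2` then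
`N(f₁(A)X − Xf₁(A)) ≤ c`; if `c ≥ 1/2` then `N(f₁(A)X − Xf₁(A)) ≤ 1 − 1/(4c)`. -/
theorem statement_13 {n : ℕ} (hn : 0 < n)
(N : Matrix (Fin n) (Fin n) ℂ → ℝ)
    (hN_add : ∀ P Q : Matrix (Fin n) (Fin n) ℂ, N (P + Q) ≤ N P + N Q)
    (hN_smul : ∀ (c : ℂ) (P : Matrix (Fin n) (Fin n) ℂ), N (c • P) = ‖c‖ * N P)
    (hN_defn : ∀ P : Matrix (Fin n) (Fin n) ℂ, N P = 0 ↔ P = 0)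
    (hN_unitary : ∀ U V P : Matrix (Fin n) (Fin n) ℂ,
      U ∈ Matrix.unitaryGroup (Fin n) ℂ → V ∈ Matrix.unitaryGroup (Fin n) ℂ →
      N (U * P * V) = N P)
    (hN_mul : ∀ P Q R : Matrix (Fin n) (Fin n) ℂ, N (P * Q * R) ≤ ‖P‖ * N Q * ‖R‖)
    (A X : Matrix (Fin n) (Fin n) ℂ) (hA : A.PosSemidef) (hX : N X ≤ 1) :
    (N (A * X - X * A) < 1 / 2 →
      N (cfc (fun x : ℝ => x / (x + 1)) A * X - X * cfc (fun x : ℝ => x / (x + 1)) A) ≤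
        N (A * X - X * A)) ∧
    (1 / 2 ≤ N (A * X - X * A) →
      N (cfc (fun x : ℝ => x / (x + 1)) A * X - X * cfc (fun x : ℝ => x / (x + 1)) A) ≤
        1 - 1 / (4 * N (A * X - X * A))) :=
  statement_13_general N hN_add hN_smul hN_mul A X hA hX
end

section
/- Let N be a unitarily-invariant norm on M_n(ℂ), let A ∈ M_n(ℂ) be Hermitian, and let X ∈ M_n(ℂ) with N(X) ≤ 1. Then N(|A|X − X|A|) ≤ (1/2)‖A‖ + N(AX − XA), where |A| = (A²)^{1/2} and ‖A‖ is the operator norm of A. -/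
/-!
Put `r = ‖A‖` and `Q = |A| - (2r)⁻¹ • A² - r/4`. Since `|A|² = A²`, `Q` is the image of `|A|`
under `x ↦ r/4 - (x - r)² / (2r)`, and the spectrum of `|A|` lies in `[0, r]`, so `‖Q‖ ≤ r/4`.
Hence `[|A|, X] = (2r)⁻¹ [A², X] + [Q, X]`, where `[A², X] = A [A, X] + [A, X] A` has
`N`-size at most `2r N([A, X])` and `N([Q, X]) ≤ 2‖Q‖ N(X) ≤ r/2`.
-/

open scoped ComplexOrder Matrix.Norms.L2Operator MatrixOrder

section CStarAlgebra

variable {E : Type*} [CStarAlgebra E]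

lemma CStarRing.norm_one_le : ‖(1 : E)‖ ≤ 1 := by
  nontriviality E
  exact CStarRing.norm_one.le

lemma IsSelfAdjoint.norm_le_of_sq_eq_sq {a b : E} (hb : IsSelfAdjoint b) (h : b ^ 2 = a ^ 2) :
    ‖b‖ ≤ ‖a‖ := by
  refine le_of_pow_le_pow_left₀ two_ne_zero (norm_nonneg a) ?_
  calc ‖b‖ ^ 2 = ‖b ^ 2‖ := by rw [sq b, hb.norm_mul_self]
    _ = ‖a ^ 2‖ := by rw [h]
    _ ≤ ‖a‖ ^ 2 := norm_pow_le' a two_pos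

/-- The polynomial `x - x² / (2r) - r/4 = r/4 - (x - r)² / (2r)` maps `[0, r]` into `[-r/4, r/4]`. -/
lemma norm_sub_smul_sq_sub_algebraMap_le [PartialOrder E] [StarOrderedRing E] {b : E}
    (hb : 0 ≤ b) {r : ℝ} (hr : 0 < r) (hbr : ‖b‖ ≤ r) :
    ‖b - (2 * r)⁻¹ • b ^ 2 - algebraMap ℝ E (r / 4)‖ ≤ r / 4 := by
  have hcfc : cfc (fun x : ℝ => x - (2 * r)⁻¹ * x ^ 2 - r / 4) b
      = b - (2 * r)⁻¹ • b ^ 2 - algebraMap ℝ E (r / 4) := by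
    rw [cfc_sub (fun x : ℝ => x - (2 * r)⁻¹ * x ^ 2) (fun _ => r / 4) b,
      cfc_sub (fun x : ℝ => x) (fun x => (2 * r)⁻¹ * x ^ 2) b,
      cfc_const_mul (2 * r)⁻¹ (fun x : ℝ => x ^ 2) b, cfc_pow_id b 2, cfc_id' ℝ b,
      cfc_const (r / 4) b]
  rw [← hcfc]
  refine norm_cfc_le (by positivity) fun x hx => ?_
  have hx0 : 0 ≤ x := spectrum_nonneg_of_nonneg hb hx
  have hxr : x ≤ r := by
    rcases subsingleton_or_nontrivial E with _ | _
    · simp [spectrum.of_subsingleton] at hx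
    exact (le_abs_self x).trans ((spectrum.norm_le_norm_of_mem hx).trans hbr)
  have hpoly : x - (2 * r)⁻¹ * x ^ 2 - r / 4 = r / 4 - (r - x) ^ 2 / (2 * r) := by
    field_simp
    ring
  have hq0 : 0 ≤ (r - x) ^ 2 / (2 * r) := by positivity
  have hq : (r - x) ^ 2 / (2 * r) ≤ r / 2 := by
    rw [div_le_iff₀ (by positivity)]
    nlinarith
  rw [hpoly, Real.norm_eq_abs, abs_le]
  constructor <;> linarith

structure IsSymmetricSeminorm (N : E → ℝ) : Prop where
  add_le : ∀ P Q : E, N (P + Q) ≤ N P + N Q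
  smul_eq : ∀ (c : ℂ) (P : E), N (c • P) = ‖c‖ * N P
  mul_mul_le : ∀ P Q R : E, N (P * Q * R) ≤ ‖P‖ * N Q * ‖R‖

namespace IsSymmetricSeminorm

variable {N : E → ℝ} (hN : IsSymmetricSeminorm N)
include hN

lemma map_zero : N 0 = 0 := by
  simpa using hN.smul_eq 0 0

lemma map_neg (P : E) : N (-P) = N P := by
  simpa using hN.smul_eq (-1) P

lemma nonneg (P : E) : 0 ≤ N P := by
  have h := hN.add_le P (-P)
  rw [add_neg_cancel, hN.map_zero, hN.map_neg] at h
  linarith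

lemma real_smul_eq (c : ℝ) (P : E) : N (c • P) = |c| * N P := by
  rw [← Complex.coe_smul, hN.smul_eq, Complex.norm_real, Real.norm_eq_abs]

lemma sub_le (P Q : E) : N (P - Q) ≤ N P + N Q := by
  simpa [sub_eq_add_neg, hN.map_neg] using hN.add_le P (-Q)

lemma mul_le_left (P Q : E) : N (P * Q) ≤ ‖P‖ * N Q := by
  calc N (P * Q) = N (P * Q * 1) := by rw [mul_one]
    _ ≤ ‖P‖ * N Q * ‖(1 : E)‖ := hN.mul_mul_le P Q 1
    _ ≤ ‖P‖ * N Q := mul_le_of_le_one_right (by positivity [hN.nonneg Q]) CStarRing.norm_one_le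

lemma mul_le_right (P Q : E) : N (P * Q) ≤ N P * ‖Q‖ := by
  calc N (P * Q) = N (1 * P * Q) := by rw [one_mul]
    _ ≤ ‖(1 : E)‖ * N P * ‖Q‖ := hN.mul_mul_le 1 P Q
    _ ≤ N P * ‖Q‖ := by
      gcongr
      exact mul_le_of_le_one_left (hN.nonneg P) CStarRing.norm_one_le

lemma commutator_le (Q X : E) : N (Q * X - X * Q) ≤ 2 * ‖Q‖ * N X := by
  calc N (Q * X - X * Q) ≤ ‖Q‖ * N X + N X * ‖Q‖ :=
        (hN.sub_le _ _).trans (add_le_add (hN.mul_le_left Q X) (hN.mul_le_right X Q))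
    _ = 2 * ‖Q‖ * N X := by ring

lemma commutator_sq_le (a X : E) :
    N (a ^ 2 * X - X * a ^ 2) ≤ 2 * ‖a‖ * N (a * X - X * a) := by
  have hexpand : a ^ 2 * X - X * a ^ 2 = a * (a * X - X * a) + (a * X - X * a) * a := by
    noncomm_ring
  calc N (a ^ 2 * X - X * a ^ 2)
      ≤ ‖a‖ * N (a * X - X * a) + N (a * X - X * a) * ‖a‖ := by
        rw [hexpand]
        exact (hN.add_le _ _).trans (add_le_add (hN.mul_le_left _ _) (hN.mul_le_right _ _))
    _ = 2 * ‖a‖ * N (a * X - X * a) := by ring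

theorem commutator_le_of_sq_eq_sq [PartialOrder E] [StarOrderedRing E] {a b X : E}
    (hb : 0 ≤ b) (hba : b ^ 2 = a ^ 2) (hX : N X ≤ 1) :
    N (b * X - X * b) ≤ 1 / 2 * ‖a‖ + N (a * X - X * a) := by
  have hbnorm : ‖b‖ ≤ ‖a‖ := hb.isSelfAdjoint.norm_le_of_sq_eq_sq hba
  rcases (norm_nonneg a).eq_or_lt with ha | hr
  · have hb0 : b = 0 := norm_le_zero_iff.mp (ha ▸ hbnorm)
    rw [hb0, mul_zero, zero_mul, sub_zero, hN.map_zero, ← ha, mul_zero, zero_add]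
    exact hN.nonneg _
  set r := ‖a‖
  set Q := b - (2 * r)⁻¹ • b ^ 2 - algebraMap ℝ E (r / 4)
  have hQ : ‖Q‖ ≤ r / 4 := norm_sub_smul_sq_sub_algebraMap_le hb hr hbnorm
  have hsplit : b * X - X * b = (2 * r)⁻¹ • (a ^ 2 * X - X * a ^ 2) + (Q * X - X * Q) := by
    simp only [Q, ← hba, Algebra.algebraMap_eq_smul_one, sub_mul, mul_sub, smul_mul_assoc,
      mul_smul_comm, one_mul, mul_one, smul_sub]
    abel
  calc N (b * X - X * b)
      ≤ (2 * r)⁻¹ * N (a ^ 2 * X - X * a ^ 2) + N (Q * X - X * Q) := by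
        rw [hsplit]
        refine (hN.add_le _ _).trans_eq ?_
        rw [hN.real_smul_eq, abs_of_pos (by positivity)]
    _ ≤ (2 * r)⁻¹ * (2 * r * N (a * X - X * a)) + 2 * (r / 4) * 1 := by
        gcongr
        · exact hN.commutator_sq_le a X
        · exact (hN.commutator_le Q X).trans (by gcongr; exact hN.nonneg X)
    _ = 1 / 2 * r + N (a * X - X * a) := by field_simp; ring

end IsSymmetricSeminorm

end CStarAlgebra

theorem statement_16_general {n : ℕ}
(N : Matrix (Fin n) (Fin n) ℂ → ℝ)
    (hN_add : ∀ P Q : Matrix (Fin n) (Fin n) ℂ, N (P + Q) ≤ N P + N Q)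
    (hN_smul : ∀ (c : ℂ) (P : Matrix (Fin n) (Fin n) ℂ), N (c • P) = ‖c‖ * N P)
    (hN_mul : ∀ P Q R : Matrix (Fin n) (Fin n) ℂ, N (P * Q * R) ≤ ‖P‖ * N Q * ‖R‖)
    (A X : Matrix (Fin n) (Fin n) ℂ) (hX : N X ≤ 1)
    (absA : Matrix (Fin n) (Fin n) ℂ) (habs_psd : absA.PosSemidef)
    (habs_sq : absA * absA = A ^ 2) :
    N (absA * X - X * absA) ≤ (1 / 2) * ‖A‖ + N (A * X - X * A) := by
  have hN : IsSymmetricSeminorm N := ⟨hN_add, hN_smul, hN_mul⟩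
  exact hN.commutator_le_of_sq_eq_sq habs_psd.nonneg ((sq absA).trans habs_sq) hX

/-- For a unitarily-invariant norm `N` on `Mₙ(ℂ)`, `A` Hermitian, `N(X) ≤ 1`:
`N(|A|X − X|A|) ≤ (1/2)‖A‖ + N(AX − XA)`, where `|A|` is the positive semidefinite
square root of `A²` and `‖A‖` is the operator norm. -/
theorem statement_16 {n : ℕ} (hn : 0 < n)
(N : Matrix (Fin n) (Fin n) ℂ → ℝ)
    (hN_add : ∀ P Q : Matrix (Fin n) (Fin n) ℂ, N (P + Q) ≤ N P + N Q)
    (hN_smul : ∀ (c : ℂ) (P : Matrix (Fin n) (Fin n) ℂ), N (c • P) = ‖c‖ * N P)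
    (hN_defn : ∀ P : Matrix (Fin n) (Fin n) ℂ, N P = 0 ↔ P = 0)
    (hN_unitary : ∀ U V P : Matrix (Fin n) (Fin n) ℂ,
      U ∈ Matrix.unitaryGroup (Fin n) ℂ → V ∈ Matrix.unitaryGroup (Fin n) ℂ →
      N (U * P * V) = N P)
    (hN_mul : ∀ P Q R : Matrix (Fin n) (Fin n) ℂ, N (P * Q * R) ≤ ‖P‖ * N Q * ‖R‖)
    (A X : Matrix (Fin n) (Fin n) ℂ) (hA : A.IsHermitian) (hX : N X ≤ 1)
    (absA : Matrix (Fin n) (Fin n) ℂ) (habs_psd : absA.PosSemidef)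
    (habs_sq : absA * absA = A ^ 2) :
    N (absA * X - X * absA) ≤ (1 / 2) * ‖A‖ + N (A * X - X * A) :=
  statement_16_general N hN_add hN_smul hN_mul A X hX absA habs_psd habs_sq
end

section
/- Let N be a unitarily-invariant norm on M_n(ℂ). Let f : [0,∞) → [0,∞) be continuous with f(0) = 0, continuously differentiable and strictly concave on (0,∞). Let A, X ∈ M_n(ℂ) with A positive semidefinite and A ≠ 0, N(X) ≤ 1, and set c = N(AX − XA). If c > 0 and f′(c) ≤ f(‖A‖)/‖A‖, where ‖A‖ is the operator norm of A, then N(f(A)X − Xf(A)) ≤ f(c). (Since f′ is strictly decreasing, the condition f′(c) ≤ f(‖A‖)/‖A‖ is equivalent to (F⁻¹∘k)(‖A‖) ≤ c with F = f′ and k(x) = f(x)/x.) -/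
/-! Put `α = f'(c)` and `M = f(c) - α c`. On `[0, ‖A‖] ⊇ σ(A)` the function `g t = f t - α t`
takes values in `[0, M]`: the upper bound is the tangent line of the concave `f` at `c`, the
lower bound is the chord of `f` from `0` to `‖A‖` together with `α ≤ f(‖A‖)/‖A‖`. Hence
`‖g(A) - M/2‖ ≤ M/2`, and since scalars commute with `X`,
`N(g(A)X - Xg(A)) ≤ 2 ‖g(A) - M/2‖ N(X) ≤ M`. Writing `f(A) = g(A) + αA` then gives
`N(f(A)X - Xf(A)) ≤ M + α c = f(c)`. -/

open scoped ComplexOrder Matrix.Norms.L2Operator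

open Set Filter Topology

lemma concaveOn_Ici_of_concaveOn_Ioi {f : ℝ → ℝ} {a : ℝ} (hf : ConcaveOn ℝ (Ioi a) f)
    (hcont : ContinuousOn f (Ici a)) : ConcaveOn ℝ (Ici a) f := by
  have shift : ∀ z ∈ Ici a, Tendsto (fun ε ↦ f (z + ε)) (𝓝[>] 0) (𝓝 (f z)) := by
    intro z hz
    refine (hcont z hz).tendsto.comp (tendsto_nhdsWithin_iff.2 ⟨?_, ?_⟩)
    · simpa only [add_zero] using
        ((continuous_const_add z).tendsto 0).mono_left nhdsWithin_le_nhds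
    · filter_upwards [self_mem_nhdsWithin] with ε hε
      exact le_add_of_le_of_nonneg hz (mem_Ioi.1 hε).le
  refine ⟨convex_Ici a, fun x hx y hy s t hs ht hst ↦ ?_⟩
  refine le_of_tendsto_of_tendsto ((((shift x hx).const_smul s).add ((shift y hy).const_smul t)))
    (shift _ (convex_Ici a hx hy hs ht hst)) ?_
  filter_upwards [self_mem_nhdsWithin] with ε hε
  have key := hf.2 (x := x + ε) (y := y + ε)
    (mem_Ioi.2 (by linarith [mem_Ici.1 hx, mem_Ioi.1 hε]))
    (mem_Ioi.2 (by linarith [mem_Ici.1 hy, mem_Ioi.1 hε])) hs ht hst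
  convert key using 2
  simp only [smul_eq_mul]
  linear_combination -ε * hst

lemma ConcaveOn.le_add_deriv_mul_sub {S : Set ℝ} {f : ℝ → ℝ} {x y : ℝ} (hf : ConcaveOn ℝ S f)
    (hx : x ∈ S) (hy : y ∈ S) (hd : DifferentiableAt ℝ f x) :
    f y ≤ f x + deriv f x * (y - x) := by
  rcases lt_trichotomy y x with hyx | rfl | hxy
  · have h := hf.deriv_le_slope hy hx hyx hd
    rw [slope_def_field, le_div_iff₀ (sub_pos.2 hyx)] at h
    linarith
  · simp
  · have h := hf.slope_le_deriv hx hy hxy hd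
    rw [slope_def_field, div_le_iff₀ (sub_pos.2 hxy)] at h
    linarith

lemma ConcaveOn.deriv_nonneg_of_nonneg {f : ℝ → ℝ} {a x : ℝ} (hf : ConcaveOn ℝ (Ici a) f)
    (hf_nonneg : ∀ y ∈ Ici a, 0 ≤ f y) (hx : x ∈ Ici a) (hd : DifferentiableAt ℝ f x) :
    0 ≤ deriv f x := by
  by_contra! hneg
  -- the tangent line at `x` takes the value `-1` at `y`
  set y := x + (f x + 1) / -deriv f x
  have hxy : x ≤ y := le_add_of_nonneg_right
    (div_nonneg (by linarith [hf_nonneg x hx]) (by linarith))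
  have htangent := hf.le_add_deriv_mul_sub hx (le_trans hx hxy) hd
  have hline : deriv f x * (y - x) = -(f x + 1) := by
    simp only [y, add_sub_cancel_left]
    field_simp [hneg.ne]
  linarith [hf_nonneg y (le_trans hx hxy)]

lemma ConcaveOn.div_mul_le_of_map_zero {f : ℝ → ℝ} {x y : ℝ} (hf : ConcaveOn ℝ (Ici 0) f)
    (hf0 : f 0 = 0) (hx : 0 ≤ x) (hxy : x ≤ y) : x / y * f y ≤ f x := by
  rcases hx.trans hxy |>.eq_or_lt with rfl | hy
  · simp [le_antisymm hxy hx, hf0]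
  have h := hf.2 (x := 0) (y := y) self_mem_Ici (hx.trans hxy) (sub_nonneg.2 ((div_le_one hy).2 hxy))
    (div_nonneg hx hy.le) (sub_add_cancel 1 _)
  simpa [hf0, div_mul_cancel₀ x hy.ne'] using h

lemma ConcaveOn.sub_deriv_mul_mem_Icc {f : ℝ → ℝ} {c r x : ℝ} (hf : ConcaveOn ℝ (Ici 0) f)
    (hf0 : f 0 = 0) (hc : 0 ≤ c) (hd : DifferentiableAt ℝ f c) (hcr : deriv f c ≤ f r / r)
    (hx : x ∈ Icc 0 r) : f x - deriv f c * x ∈ Icc 0 (f c - deriv f c * c) := by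
  constructor
  · rw [sub_nonneg]
    calc deriv f c * x ≤ f r / r * x := mul_le_mul_of_nonneg_right hcr hx.1
      _ = x / r * f r := by ring
      _ ≤ f x := hf.div_mul_le_of_map_zero hf0 hx.1 hx.2
  · linarith [hf.le_add_deriv_mul_sub hc hx.1 hd]

section CStarAlgebra

variable {𝒜 : Type*} [CStarAlgebra 𝒜]

lemma Seminorm.commutator_le_of_commute (p : Seminorm ℂ 𝒜)
    (hp : ∀ P Q R : 𝒜, p (P * Q * R) ≤ ‖P‖ * p Q * ‖R‖) {z x : 𝒜} (hzx : Commute z x) (b : 𝒜) :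
    p (b * x - x * b) ≤ 2 * ‖b - z‖ * p x := by
  have norm_one_le : ‖(1 : 𝒜)‖ ≤ 1 := by
    rcases subsingleton_or_nontrivial 𝒜 with h | h
    · simp [Subsingleton.elim (1 : 𝒜) 0]
    · simp
  have hleft : p ((b - z) * x) ≤ ‖b - z‖ * p x := by
    simpa using (hp (b - z) x 1).trans (mul_le_of_le_one_right (by positivity) norm_one_le)
  have hright : p (x * (b - z)) ≤ ‖b - z‖ * p x := by
    simpa [mul_comm] using (hp 1 x (b - z)).trans
      (mul_le_mul_of_nonneg_right (mul_le_of_le_one_left (apply_nonneg p x) norm_one_le)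
        (norm_nonneg _))
  calc p (b * x - x * b) = p ((b - z) * x - x * (b - z)) := by
        rw [sub_mul, mul_sub, hzx.eq]; abel_nf
    _ ≤ p ((b - z) * x) + p (x * (b - z)) := map_sub_le_add p _ _
    _ ≤ 2 * ‖b - z‖ * p x := by linarith

lemma IsSelfAdjoint.norm_cfc_sub_algebraMap_half_le {a : 𝒜} (ha : IsSelfAdjoint a)
    {g : ℝ → ℝ} (hg : ContinuousOn g (spectrum ℝ a)) {M : ℝ} (hM : 0 ≤ M)
    (hgM : ∀ t ∈ spectrum ℝ a, g t ∈ Icc 0 M) :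
    ‖cfc g a - algebraMap ℝ 𝒜 (M / 2)‖ ≤ M / 2 := by
  rw [← cfc_const (M / 2) a, ← cfc_sub g (fun _ ↦ M / 2) a]
  refine norm_cfc_le (by linarith) fun t ht ↦ ?_
  obtain ⟨h0, hM⟩ := hgM t ht
  rw [Real.norm_eq_abs, abs_le]
  constructor <;> linarith

theorem Seminorm.commutator_cfc_le (p : Seminorm ℂ 𝒜)
    (hp : ∀ P Q R : 𝒜, p (P * Q * R) ≤ ‖P‖ * p Q * ‖R‖) {a : 𝒜} (ha : IsSelfAdjoint a)
    {f : ℝ → ℝ} (hf : ContinuousOn f (spectrum ℝ a)) {α M : ℝ} (hα : 0 ≤ α) (hM : 0 ≤ M)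
    (hfM : ∀ t ∈ spectrum ℝ a, f t - α * t ∈ Icc 0 M) (x : 𝒜) :
    p (cfc f a * x - x * cfc f a) ≤ M * p x + α * p (a * x - x * a) := by
  have hb : cfc f a = cfc (fun t ↦ f t - α * t) a + α • a := by
    rw [cfc_sub f (fun t ↦ α * t) a, cfc_const_mul_id α a]; abel
  set b := cfc (fun t ↦ f t - α * t) a
  have hsplit : cfc f a * x - x * cfc f a = (b * x - x * b) + (α : ℂ) • (a * x - x * a) := by
    rw [hb, ← Complex.coe_smul]
    simp only [add_mul, mul_add, smul_mul_assoc, mul_smul_comm, smul_sub]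
    abel
  have hb_comm : p (b * x - x * b) ≤ M * p x := by
    calc p (b * x - x * b) ≤ 2 * ‖b - algebraMap ℝ 𝒜 (M / 2)‖ * p x :=
          p.commutator_le_of_commute hp (Algebra.commutes _ x) b
      _ ≤ 2 * (M / 2) * p x := by
          gcongr
          exact ha.norm_cfc_sub_algebraMap_half_le (hf.sub (by fun_prop)) hM hfM
      _ = M * p x := by ring
  calc p (cfc f a * x - x * cfc f a)
      ≤ p (b * x - x * b) + p ((α : ℂ) • (a * x - x * a)) := hsplit ▸ map_add_le_add p _ _
    _ ≤ M * p x + α * p (a * x - x * a) := by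
        rw [map_smul_eq_mul, Complex.norm_real, Real.norm_of_nonneg hα]
        linarith

end CStarAlgebra

theorem statement_17_general {n : ℕ}
(N : Matrix (Fin n) (Fin n) ℂ → ℝ)
    (hN_add : ∀ P Q : Matrix (Fin n) (Fin n) ℂ, N (P + Q) ≤ N P + N Q)
    (hN_smul : ∀ (c : ℂ) (P : Matrix (Fin n) (Fin n) ℂ), N (c • P) = ‖c‖ * N P)
    (hN_mul : ∀ P Q R : Matrix (Fin n) (Fin n) ℂ, N (P * Q * R) ≤ ‖P‖ * N Q * ‖R‖)
    (f : ℝ → ℝ)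
    (hf_cont : ContinuousOn f (Set.Ici 0)) (hf0 : f 0 = 0)
    (hf_nonneg : ∀ x : ℝ, 0 ≤ x → 0 ≤ f x)
    (hf_diff : ContDiffOn ℝ 1 f (Set.Ioi 0))
    (hf_concave : StrictConcaveOn ℝ (Set.Ioi 0) f)
    (A X : Matrix (Fin n) (Fin n) ℂ) (hA : A.PosSemidef)
    (hX : N X ≤ 1)
    (hc : 0 < N (A * X - X * A))
    (hcond : deriv f (N (A * X - X * A)) ≤ f ‖A‖ / ‖A‖) :
    N (cfc f A * X - X * cfc f A) ≤ f (N (A * X - X * A)) := by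
  set c := N (A * X - X * A)
  let p : Seminorm ℂ (Matrix (Fin n) (Fin n) ℂ) := .of N hN_add hN_smul
  -- gives `‖1‖ = 1`, needed to bound the spectrum by the norm
  have : Nontrivial (Matrix (Fin n) (Fin n) ℂ) :=
    nontrivial_of_ne (A * X - X * A) 0 fun h ↦ hc.ne' <| by
      show p (A * X - X * A) = 0
      rw [h, map_zero]
  have hf : ConcaveOn ℝ (Ici 0) f := concaveOn_Ici_of_concaveOn_Ioi hf_concave.concaveOn hf_cont
  have hd : DifferentiableAt ℝ f c :=
    (hf_diff.differentiableOn one_ne_zero).differentiableAt (Ioi_mem_nhds hc)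
  have hspec : spectrum ℝ A ⊆ Icc 0 ‖A‖ := fun t ht ↦ by
    refine ⟨?_, (le_abs_self t).trans (spectrum.norm_le_norm_of_mem ht)⟩
    obtain ⟨i, rfl⟩ := hA.isHermitian.spectrum_real_eq_range_eigenvalues ▸ ht
    exact hA.eigenvalues_nonneg i
  have hM : 0 ≤ f c - deriv f c * c := by
    simpa [hf0] using hf.le_add_deriv_mul_sub hc.le self_mem_Ici hd
  calc N (cfc f A * X - X * cfc f A)
      ≤ (f c - deriv f c * c) * N X + deriv f c * c :=
        p.commutator_cfc_le hN_mul hA.isHermitian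
          (hf_cont.mono fun t ht ↦ (hspec ht).1) (hf.deriv_nonneg_of_nonneg hf_nonneg hc.le hd) hM
          (fun t ht ↦ hf.sub_deriv_mul_mem_Icc hf0 hc.le hd hcond (hspec ht)) X
    _ ≤ f c := by linarith [mul_le_of_le_one_right hM hX]

/-- Let `f : [0,∞) → [0,∞)` be continuous with `f(0) = 0`, continuously differentiable
and strictly concave on `(0,∞)`. Let `A` be psd with `A ≠ 0`, `N(X) ≤ 1`, and
`c = N(AX − XA)`. If `c > 0` and `f′(c) ≤ f(‖A‖)/‖A‖` then
`N(f(A)X − Xf(A)) ≤ f(c)`. -/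
theorem statement_17 {n : ℕ} (hn : 0 < n)
(N : Matrix (Fin n) (Fin n) ℂ → ℝ)
    (hN_add : ∀ P Q : Matrix (Fin n) (Fin n) ℂ, N (P + Q) ≤ N P + N Q)
    (hN_smul : ∀ (c : ℂ) (P : Matrix (Fin n) (Fin n) ℂ), N (c • P) = ‖c‖ * N P)
    (hN_defn : ∀ P : Matrix (Fin n) (Fin n) ℂ, N P = 0 ↔ P = 0)
    (hN_unitary : ∀ U V P : Matrix (Fin n) (Fin n) ℂ,
      U ∈ Matrix.unitaryGroup (Fin n) ℂ → V ∈ Matrix.unitaryGroup (Fin n) ℂ →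
      N (U * P * V) = N P)
    (hN_mul : ∀ P Q R : Matrix (Fin n) (Fin n) ℂ, N (P * Q * R) ≤ ‖P‖ * N Q * ‖R‖)
    (f : ℝ → ℝ)
    (hf_cont : ContinuousOn f (Set.Ici 0)) (hf0 : f 0 = 0)
    (hf_nonneg : ∀ x : ℝ, 0 ≤ x → 0 ≤ f x)
    (hf_diff : ContDiffOn ℝ 1 f (Set.Ioi 0))
    (hf_concave : StrictConcaveOn ℝ (Set.Ioi 0) f)
    (A X : Matrix (Fin n) (Fin n) ℂ) (hA : A.PosSemidef) (hA0 : A ≠ 0)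
    (hX : N X ≤ 1)
    (hc : 0 < N (A * X - X * A))
    (hcond : deriv f (N (A * X - X * A)) ≤ f ‖A‖ / ‖A‖) :
    N (cfc f A * X - X * cfc f A) ≤ f (N (A * X - X * A)) :=
  statement_17_general N hN_add hN_smul hN_mul f hf_cont hf0 hf_nonneg hf_diff hf_concave A X hA hX
    hc hcond
end

section
/- Let N be a unitarily-invariant norm on M_n(ℂ), let a₁, a₂ ≥ 0, let A ∈ M_n(ℂ) be Hermitian with −a₁·I ≤ A ≤ a₂·I in the Loewner order, and let X ∈ M_n(ℂ) with N(X) ≤ 1. Then N(|A|X − X|A|) ≤ 2·min(a₁, a₂) + N(AX − XA), where |A| = (A²)^{1/2}. -/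
open scoped ComplexOrder Matrix.Norms.L2Operator

/-!
Write `C = |A| - A - a₁`. On the spectrum of `A`, which lies in `[-a₁, ∞)`, the function
`t ↦ |t| - t - a₁` takes values in `[-a₁, a₁]`, so `‖C‖ ≤ a₁`. Since scalars commute with `X`,
`[|A|, X] = [A, X] + [C, X]`, and `N([C, X]) ≤ 2‖C‖ N(X) ≤ 2a₁`. Replacing `A` by `-A`, which has
the same absolute value and satisfies `-A ≥ -a₂`, gives the bound with `a₂`.
-/

theorem Seminorm.map_commutator_le_s18 {𝕜 R : Type*} [SeminormedRing 𝕜] [NormedRing R] [SMul 𝕜 R]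
    (p : Seminorm 𝕜 R) (hmul : ∀ P Q S : R, p (P * Q * S) ≤ ‖P‖ * p Q * ‖S‖)
    (h1 : ‖(1 : R)‖ ≤ 1) (c x : R) :
    p (c * x - x * c) ≤ 2 * ‖c‖ * p x := by
  have hleft : p (c * x) ≤ ‖c‖ * p x := by
    simpa using (hmul c x 1).trans (mul_le_of_le_one_right (by positivity) h1)
  have hright : p (x * c) ≤ ‖c‖ * p x := by
    calc p (x * c) = p (1 * x * c) := by rw [one_mul]
      _ ≤ ‖(1 : R)‖ * p x * ‖c‖ := hmul 1 x c
      _ ≤ 1 * p x * ‖c‖ := by gcongr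
      _ = ‖c‖ * p x := by ring
  linarith [map_sub_le_add p (c * x) (x * c)]

theorem CStarRing.norm_one_le_s18 {A : Type*} [NormedRing A] [StarRing A] [CStarRing A] :
    ‖(1 : A)‖ ≤ 1 := by
  nontriviality A
  rw [CStarRing.norm_one]

section CStarAlgebra

variable {A : Type*} [CStarAlgebra A] [PartialOrder A] [StarOrderedRing A]

theorem norm_cfcAbs_sub_self_sub_le {a : A} {c : ℝ} (hc : 0 ≤ c) (ha : IsSelfAdjoint a)
    (hlow : algebraMap ℝ A (-c) ≤ a) : ‖CFC.abs a - a - algebraMap ℝ A c‖ ≤ c := by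
  have hspec := (algebraMap_le_iff_le_spectrum ha).1 hlow
  have hcfc : cfc (fun t : ℝ => ‖t‖ - t - c) a = CFC.abs a - a - algebraMap ℝ A c := by
    rw [cfc_sub (fun t : ℝ => ‖t‖ - t) (fun _ => c) a, cfc_sub (fun t : ℝ => ‖t‖) (fun t => t) a,
      cfc_const c a, cfc_id' ℝ a, ← CFC.abs_eq_cfc_norm a]
  rw [← hcfc]
  refine norm_cfc_le hc fun t ht => ?_
  have hct := hspec t ht
  rw [Real.norm_eq_abs, Real.norm_eq_abs, abs_le]
  rcases le_total 0 t with h | h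
  · rw [abs_of_nonneg h]; constructor <;> linarith
  · rw [abs_of_nonpos h]; constructor <;> linarith

variable (p : Seminorm ℂ A) (hmul : ∀ P Q S : A, p (P * Q * S) ≤ ‖P‖ * p Q * ‖S‖)
include hmul

theorem Seminorm.map_commutator_cfcAbs_le_of_le {a : A} {c : ℝ} (hc : 0 ≤ c)
    (ha : IsSelfAdjoint a) (hlow : algebraMap ℝ A (-c) ≤ a) (x : A) :
    p (CFC.abs a * x - x * CFC.abs a) ≤ 2 * c * p x + p (a * x - x * a) := by
  set C := CFC.abs a - a - algebraMap ℝ A c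
  have hsplit : CFC.abs a * x - x * CFC.abs a = (a * x - x * a) + (C * x - x * C) := by
    simp only [C, sub_mul, mul_sub, Algebra.commutes]
    abel
  have hC := norm_cfcAbs_sub_self_sub_le hc ha hlow
  have hCx := p.map_commutator_le_s18 hmul CStarRing.norm_one_le_s18 C x
  rw [hsplit]
  nlinarith [map_add_le_add p (a * x - x * a) (C * x - x * C), apply_nonneg p x]

theorem Seminorm.map_commutator_cfcAbs_le {a : A} {c₁ c₂ : ℝ} (hc₁ : 0 ≤ c₁)
    (hc₂ : 0 ≤ c₂) (ha : IsSelfAdjoint a) (hlow : algebraMap ℝ A (-c₁) ≤ a)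
    (hup : a ≤ algebraMap ℝ A c₂) (x : A) :
    p (CFC.abs a * x - x * CFC.abs a) ≤ 2 * min c₁ c₂ * p x + p (a * x - x * a) := by
  rcases le_total c₁ c₂ with h | h
  · rw [min_eq_left h]
    exact p.map_commutator_cfcAbs_le_of_le hmul hc₁ ha hlow x
  · have hlow' : algebraMap ℝ A (-c₂) ≤ -a := by
      rw [map_neg]
      exact neg_le_neg hup
    have := p.map_commutator_cfcAbs_le_of_le hmul hc₂ ha.neg hlow' x
    rwa [CFC.abs_neg, neg_mul, mul_neg, sub_neg_eq_add, neg_add_eq_sub, ← neg_sub (a * x) (x * a),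
      map_neg_eq_map, ← min_eq_right h] at this

end CStarAlgebra

open scoped MatrixOrder

theorem Matrix.algebraMap_real_eq_smul_one {m : Type*} [Fintype m] [DecidableEq m] (r : ℝ) :
    algebraMap ℝ (Matrix m m ℂ) r = (r : ℂ) • 1 := by
  rw [Algebra.algebraMap_eq_smul_one, Complex.coe_smul]

theorem statement_18_general {n : ℕ}
(N : Matrix (Fin n) (Fin n) ℂ → ℝ)
    (hN_add : ∀ P Q : Matrix (Fin n) (Fin n) ℂ, N (P + Q) ≤ N P + N Q)
    (hN_smul : ∀ (c : ℂ) (P : Matrix (Fin n) (Fin n) ℂ), N (c • P) = ‖c‖ * N P)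
    (hN_mul : ∀ P Q R : Matrix (Fin n) (Fin n) ℂ, N (P * Q * R) ≤ ‖P‖ * N Q * ‖R‖)
    (a₁ a₂ : ℝ) (ha₁ : 0 ≤ a₁) (ha₂ : 0 ≤ a₂)
    (A X : Matrix (Fin n) (Fin n) ℂ) (hA : A.IsHermitian)
    (hlow : (A + (a₁ : ℂ) • (1 : Matrix (Fin n) (Fin n) ℂ)).PosSemidef)
    (hup : ((a₂ : ℂ) • (1 : Matrix (Fin n) (Fin n) ℂ) - A).PosSemidef)
    (hX : N X ≤ 1)
    (absA : Matrix (Fin n) (Fin n) ℂ) (habs_psd : absA.PosSemidef)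
    (habs_sq : absA * absA = A ^ 2) :
    N (absA * X - X * absA) ≤ 2 * min a₁ a₂ + N (A * X - X * A) := by
  let p : Seminorm ℂ (Matrix (Fin n) (Fin n) ℂ) := Seminorm.of N hN_add hN_smul
  have habs : absA = CFC.abs A :=
    (CFC.sqrt_unique (by rw [habs_sq, hA.isSelfAdjoint.star_eq, sq]) habs_psd.nonneg).symm
  have hlow' : algebraMap ℝ _ (-a₁) ≤ A := by
    rwa [Matrix.le_iff, Matrix.algebraMap_real_eq_smul_one, Complex.ofReal_neg, neg_smul,
      sub_neg_eq_add]
  have hup' : A ≤ algebraMap ℝ _ a₂ := by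
    rwa [Matrix.le_iff, Matrix.algebraMap_real_eq_smul_one]
  have hbound := p.map_commutator_cfcAbs_le hN_mul ha₁ ha₂ hA.isSelfAdjoint hlow' hup' X
  have hscaled : 2 * min a₁ a₂ * p X ≤ 2 * min a₁ a₂ :=
    mul_le_of_le_one_right (by have := le_min ha₁ ha₂; positivity) hX
  rw [habs]
  show p _ ≤ 2 * min a₁ a₂ + p _
  linarith

/-- For a unitarily-invariant norm `N` on `Mₙ(ℂ)`, `a₁, a₂ ≥ 0`, `A` Hermitian with
`−a₁·I ≤ A ≤ a₂·I` in the Loewner order, and `N(X) ≤ 1`: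
`N(|A|X − X|A|) ≤ 2·min(a₁, a₂) + N(AX − XA)`, where `|A| = (A²)^{1/2}`. -/
theorem statement_18 {n : ℕ} (hn : 0 < n)
(N : Matrix (Fin n) (Fin n) ℂ → ℝ)
    (hN_add : ∀ P Q : Matrix (Fin n) (Fin n) ℂ, N (P + Q) ≤ N P + N Q)
    (hN_smul : ∀ (c : ℂ) (P : Matrix (Fin n) (Fin n) ℂ), N (c • P) = ‖c‖ * N P)
    (hN_defn : ∀ P : Matrix (Fin n) (Fin n) ℂ, N P = 0 ↔ P = 0)
    (hN_unitary : ∀ U V P : Matrix (Fin n) (Fin n) ℂ,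
      U ∈ Matrix.unitaryGroup (Fin n) ℂ → V ∈ Matrix.unitaryGroup (Fin n) ℂ →
      N (U * P * V) = N P)
    (hN_mul : ∀ P Q R : Matrix (Fin n) (Fin n) ℂ, N (P * Q * R) ≤ ‖P‖ * N Q * ‖R‖)
    (a₁ a₂ : ℝ) (ha₁ : 0 ≤ a₁) (ha₂ : 0 ≤ a₂)
    (A X : Matrix (Fin n) (Fin n) ℂ) (hA : A.IsHermitian)
    (hlow : (A + (a₁ : ℂ) • (1 : Matrix (Fin n) (Fin n) ℂ)).PosSemidef)
    (hup : ((a₂ : ℂ) • (1 : Matrix (Fin n) (Fin n) ℂ) - A).PosSemidef)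
    (hX : N X ≤ 1)
    (absA : Matrix (Fin n) (Fin n) ℂ) (habs_psd : absA.PosSemidef)
    (habs_sq : absA * absA = A ^ 2) :
    N (absA * X - X * absA) ≤ 2 * min a₁ a₂ + N (A * X - X * A) :=
  statement_18_general N hN_add hN_smul hN_mul a₁ a₂ ha₁ ha₂ A X hA hlow hup hX absA habs_psd
    habs_sq
end

section
/- Let ‖·‖_F denote the Frobenius (Hilbert–Schmidt) norm on M_n(ℂ). Let f : [0,∞) → [0,∞) be concave, let A ∈ M_n(ℂ) be positive semidefinite, and let X ∈ M_n(ℂ) with ‖X‖_F ≤ 1. Then ‖f(A)X − Xf(A)‖_F ≤ f(‖AX − XA‖_F). -/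
open scoped ComplexOrder

/-- The Frobenius (Hilbert–Schmidt) norm on `Mₙ(ℂ)`. -/
noncomputable def frobeniusNorm' {n : ℕ} (X : Matrix (Fin n) (Fin n) ℂ) : ℝ :=
  Real.sqrt (∑ i, ∑ j, ‖X i j‖ ^ 2)

/-!
Diagonalise `A = U diag(λ) U*` and put `Y = U* X U`. The Frobenius norm is unitarily invariant, so
`‖g(A) X - X g(A)‖_F² = ∑ |Y i j|² (g λ_i - g λ_j)²` for every `g`, in particular for `g = f` and
`g = id`, and `∑ |Y i j|² ≤ 1`. A nonnegative concave `f` on `[0, ∞)` is nondecreasing and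
subadditive, hence `|f λ_i - f λ_j| ≤ f |λ_i - λ_j|`. What remains is the scalar inequality
`∑ w_k f(t_k)² ≤ f(m)²` for weights with `∑ w_k ≤ 1` and `∑ w_k t_k² ≤ m²`: bound `f` by a
supporting line `a + c t` at `m` with `a, c ≥ 0`, and use `∑ w_k t_k ≤ m` (Cauchy–Schwarz).
-/

theorem Finset.sq_sum_mul_le_sum_mul_sq {ι : Type*} (s : Finset ι) {w t : ι → ℝ}
    (hw : ∀ i ∈ s, 0 ≤ w i) (hw₁ : ∑ i ∈ s, w i ≤ 1) :
    (∑ i ∈ s, w i * t i) ^ 2 ≤ ∑ i ∈ s, w i * t i ^ 2 := by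
  have hwt₂ : 0 ≤ ∑ i ∈ s, w i * t i ^ 2 :=
    Finset.sum_nonneg fun i hi => mul_nonneg (hw i hi) (sq_nonneg _)
  refine (Finset.sum_sq_le_sum_mul_sum_of_sq_le_mul s (f := w) (g := fun i => w i * t i ^ 2) hw
    (fun i hi => mul_nonneg (hw i hi) (sq_nonneg _)) fun i _ => le_of_eq (by ring)).trans ?_
  exact mul_le_of_le_one_left hwt₂ hw₁

theorem ConcaveOn.exists_le_add_mul_sub_of_mem_interior {S : Set ℝ} {f : ℝ → ℝ}
    (hf : ConcaveOn ℝ S f) {m : ℝ} (hm : m ∈ interior S) :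
    ∃ c, ∀ y ∈ S, f y ≤ f m + c * (y - m) := by
  have hg : ConvexOn ℝ S (-f) := hf.neg
  refine ⟨-derivWithin (-f) (Set.Ioi m) m, fun y hy => ?_⟩
  rcases lt_trichotomy y m with hym | rfl | hmy
  · have h := (hg.slope_le_leftDeriv_of_mem_interior hy hm hym).trans
      (hg.leftDeriv_le_rightDeriv_of_mem_interior hm)
    rw [slope_def_field, div_le_iff₀ (sub_pos.2 hym)] at h
    simp only [Pi.neg_apply] at h
    linarith
  · simp
  · have h := hg.rightDeriv_le_slope_of_mem_interior hm hy hmy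
    rw [slope_def_field, le_div_iff₀ (sub_pos.2 hmy)] at h
    simp only [Pi.neg_apply] at h
    linarith

namespace ConcaveOn

variable {f : ℝ → ℝ}

theorem exists_nonneg_le_add_mul_sub_of_nonneg (hf : ConcaveOn ℝ (Set.Ici 0) f)
    (hf₀ : ∀ x : ℝ, 0 ≤ x → 0 ≤ f x) {m : ℝ} (hm : 0 < m) :
    ∃ c, 0 ≤ c ∧ ∀ y, 0 ≤ y → f y ≤ f m + c * (y - m) := by
  obtain ⟨c, hc⟩ := hf.exists_le_add_mul_sub_of_mem_interior (by rwa [interior_Ici])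
  refine ⟨c, not_lt.1 fun hc₀ => ?_, fun y hy => hc y hy⟩
  -- a supporting line of negative slope is below zero at `y`, and so would be `f y`
  have hc' : 0 < -c := neg_pos.2 hc₀
  set y := m + (f m + 1) / -c
  have hy : 0 ≤ y := by have := hf₀ m hm.le; positivity
  have h := hc y hy
  rw [show c * (y - m) = -(f m + 1) by
    simp only [y, add_sub_cancel_left]; field_simp [hc₀.ne]] at h
  linarith [hf₀ y hy]

theorem monotoneOn_Ici_of_nonneg (hf : ConcaveOn ℝ (Set.Ici 0) f)
    (hf₀ : ∀ x : ℝ, 0 ≤ x → 0 ≤ f x) : MonotoneOn f (Set.Ici 0) := by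
  intro a ha b _ hab
  rcases hab.eq_or_lt with rfl | hlt
  · exact le_rfl
  obtain ⟨c, hc₀, hc⟩ := hf.exists_nonneg_le_add_mul_sub_of_nonneg hf₀ (lt_of_le_of_lt ha hlt)
  nlinarith [hc a ha]

theorem mul_le_map_mul_of_nonneg (hf : ConcaveOn ℝ (Set.Ici 0) f)
    (hf₀ : ∀ x : ℝ, 0 ≤ x → 0 ≤ f x) {t x : ℝ} (ht₀ : 0 ≤ t) (ht₁ : t ≤ 1) (hx : 0 ≤ x) :
    t * f x ≤ f (t * x) := by
  have h := hf.2 (Set.mem_Ici.2 hx) (Set.mem_Ici.2 le_rfl) ht₀ (sub_nonneg.2 ht₁)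
    (add_sub_cancel t 1)
  simp only [smul_eq_mul, mul_zero, add_zero] at h
  nlinarith [hf₀ 0 le_rfl]

theorem map_add_le_add_of_nonneg (hf : ConcaveOn ℝ (Set.Ici 0) f)
    (hf₀ : ∀ x : ℝ, 0 ≤ x → 0 ≤ f x) {x y : ℝ} (hx : 0 ≤ x) (hy : 0 ≤ y) :
    f (x + y) ≤ f x + f y := by
  rcases (add_nonneg hx hy).eq_or_lt with hxy | hxy
  · obtain ⟨rfl, rfl⟩ : x = 0 ∧ y = 0 := by constructor <;> linarith
    rw [add_zero]
    linarith [hf₀ 0 le_rfl]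
  have hchord {u : ℝ} (hu : 0 ≤ u) (hux : u ≤ x + y) : u / (x + y) * f (x + y) ≤ f u := by
    simpa [div_mul_cancel₀ u hxy.ne'] using
      hf.mul_le_map_mul_of_nonneg hf₀ (div_nonneg hu hxy.le) ((div_le_one hxy).2 hux) hxy.le
  have := add_le_add (hchord hx (by linarith)) (hchord hy (by linarith))
  rwa [← add_mul, ← add_div, div_self hxy.ne', one_mul] at this

theorem abs_sub_map_le_map_abs_sub_of_nonneg (hf : ConcaveOn ℝ (Set.Ici 0) f)
    (hf₀ : ∀ x : ℝ, 0 ≤ x → 0 ≤ f x) {a b : ℝ} (ha : 0 ≤ a) (hb : 0 ≤ b) :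
    |f a - f b| ≤ f |a - b| := by
  wlog hba : b ≤ a generalizing a b
  · rw [abs_sub_comm, abs_sub_comm a]
    exact this hb ha (le_of_not_ge hba)
  have hmono := hf.monotoneOn_Ici_of_nonneg hf₀ hb ha hba
  rw [abs_of_nonneg (sub_nonneg.2 hmono), abs_of_nonneg (sub_nonneg.2 hba)]
  have := hf.map_add_le_add_of_nonneg hf₀ hb (sub_nonneg.2 hba)
  rw [add_sub_cancel] at this
  linarith

theorem sum_mul_map_sq_le_of_nonneg (hf : ConcaveOn ℝ (Set.Ici 0) f)
    (hf₀ : ∀ x : ℝ, 0 ≤ x → 0 ≤ f x) {ι : Type*} (s : Finset ι) {w t : ι → ℝ}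
    (hw : ∀ i ∈ s, 0 ≤ w i) (ht : ∀ i ∈ s, 0 ≤ t i) (hw₁ : ∑ i ∈ s, w i ≤ 1) {m : ℝ}
    (hm : 0 ≤ m) (hwt₂ : ∑ i ∈ s, w i * t i ^ 2 ≤ m ^ 2) :
    ∑ i ∈ s, w i * f (t i) ^ 2 ≤ f m ^ 2 := by
  rcases hm.eq_or_lt with rfl | hm
  · have hzero : ∀ i ∈ s, w i * t i ^ 2 = 0 :=
      (Finset.sum_eq_zero_iff_of_nonneg fun i hi => mul_nonneg (hw i hi) (sq_nonneg _)).1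
        (le_antisymm (by simpa using hwt₂)
          (Finset.sum_nonneg fun i hi => mul_nonneg (hw i hi) (sq_nonneg _)))
    calc ∑ i ∈ s, w i * f (t i) ^ 2 = ∑ i ∈ s, w i * f 0 ^ 2 :=
          Finset.sum_congr rfl fun i hi => by
            rcases mul_eq_zero.1 (hzero i hi) with h | h
            · simp [h]
            · rw [pow_eq_zero_iff two_ne_zero |>.1 h]
      _ = (∑ i ∈ s, w i) * f 0 ^ 2 := (Finset.sum_mul ..).symm
      _ ≤ f 0 ^ 2 := mul_le_of_le_one_left (sq_nonneg _) hw₁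
  obtain ⟨c, hc₀, hc⟩ := hf.exists_nonneg_le_add_mul_sub_of_nonneg hf₀ hm
  set a := f m - c * m
  have ha : 0 ≤ a := by linarith [hc 0 le_rfl, hf₀ 0 le_rfl]
  have hwt : ∑ i ∈ s, w i * t i ≤ m :=
    (abs_le_of_sq_le_sq' ((s.sq_sum_mul_le_sum_mul_sq hw hw₁).trans hwt₂) hm.le).2
  calc ∑ i ∈ s, w i * f (t i) ^ 2 ≤ ∑ i ∈ s, w i * (a + c * t i) ^ 2 :=
        Finset.sum_le_sum fun i hi => mul_le_mul_of_nonneg_left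
          (pow_le_pow_left₀ (hf₀ _ (ht i hi)) (by linarith [hc _ (ht i hi)]) 2) (hw i hi)
    _ = a ^ 2 * ∑ i ∈ s, w i + 2 * a * c * ∑ i ∈ s, w i * t i
          + c ^ 2 * ∑ i ∈ s, w i * t i ^ 2 := by
        simp only [Finset.mul_sum, ← Finset.sum_add_distrib]
        exact Finset.sum_congr rfl fun _ _ => by ring
    _ ≤ a ^ 2 * 1 + 2 * a * c * m + c ^ 2 * m ^ 2 := by gcongr
    _ = f m ^ 2 := by ring

theorem sqrt_sum_mul_map_sq_le_of_nonneg (hf : ConcaveOn ℝ (Set.Ici 0) f)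
    (hf₀ : ∀ x : ℝ, 0 ≤ x → 0 ≤ f x) {ι : Type*} (s : Finset ι) {w t : ι → ℝ}
    (hw : ∀ i ∈ s, 0 ≤ w i) (ht : ∀ i ∈ s, 0 ≤ t i) (hw₁ : ∑ i ∈ s, w i ≤ 1) :
    √(∑ i ∈ s, w i * f (t i) ^ 2) ≤ f √(∑ i ∈ s, w i * t i ^ 2) := by
  have hm := Real.sqrt_nonneg (∑ i ∈ s, w i * t i ^ 2)
  refine (Real.sqrt_le_left (hf₀ _ hm)).2 (hf.sum_mul_map_sq_le_of_nonneg hf₀ s hw ht hw₁ hm ?_)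
  rw [Real.sq_sqrt (Finset.sum_nonneg fun i hi => mul_nonneg (hw i hi) (sq_nonneg _))]

end ConcaveOn

open Matrix Unitary

section Frobenius

variable {n : ℕ}

theorem frobeniusNorm'_nonneg (M : Matrix (Fin n) (Fin n) ℂ) : 0 ≤ frobeniusNorm' M :=
  Real.sqrt_nonneg _

theorem frobeniusNorm'_sq (M : Matrix (Fin n) (Fin n) ℂ) :
    frobeniusNorm' M ^ 2 = ∑ i, ∑ j, ‖M i j‖ ^ 2 :=
  Real.sq_sqrt (Finset.sum_nonneg fun _ _ => Finset.sum_nonneg fun _ _ => sq_nonneg _)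

theorem ofReal_frobeniusNorm'_sq (M : Matrix (Fin n) (Fin n) ℂ) :
    ((frobeniusNorm' M ^ 2 : ℝ) : ℂ) = (star M * M).trace := by
  rw [frobeniusNorm'_sq, Finset.sum_comm]
  push_cast
  simp only [trace, diag_apply, mul_apply, star_apply, Complex.star_def, Complex.conj_mul']

theorem frobeniusNorm'_conjStarAlgAut (u : unitary (Matrix (Fin n) (Fin n) ℂ))
    (M : Matrix (Fin n) (Fin n) ℂ) :
    frobeniusNorm' (conjStarAlgAut ℂ _ u M) = frobeniusNorm' M := by
  refine (sq_eq_sq₀ (frobeniusNorm'_nonneg _) (frobeniusNorm'_nonneg _)).1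
    (Complex.ofReal_injective ?_)
  rw [ofReal_frobeniusNorm'_sq, ofReal_frobeniusNorm'_sq, ← map_star, ← map_mul,
    conjStarAlgAut_apply, trace_mul_cycle, Unitary.coe_star_mul_self, one_mul]

theorem frobeniusNorm'_diagonal_commutator (c : Fin n → ℝ) (Y : Matrix (Fin n) (Fin n) ℂ) :
    frobeniusNorm' (diagonal (RCLike.ofReal ∘ c) * Y - Y * diagonal (RCLike.ofReal ∘ c)) =
      √(∑ i, ∑ j, ‖Y i j‖ ^ 2 * (c i - c j) ^ 2) := by
  unfold frobeniusNorm'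
  congr! 4 with i _ j _
  rw [Matrix.sub_apply, diagonal_mul, mul_diagonal, mul_comm (Y i j), ← sub_mul, norm_mul,
    mul_pow, mul_comm]
  simp [← Complex.ofReal_sub, sq_abs]

theorem frobeniusNorm'_cfc_commutator {A : Matrix (Fin n) (Fin n) ℂ} (hA : A.IsHermitian)
    (g : ℝ → ℝ) (X : Matrix (Fin n) (Fin n) ℂ) :
    frobeniusNorm' (cfc g A * X - X * cfc g A) =
      √(∑ i, ∑ j, ‖(conjStarAlgAut ℂ _ hA.eigenvectorUnitary).symm X i j‖ ^ 2 *
        (g (hA.eigenvalues i) - g (hA.eigenvalues j)) ^ 2) := by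
  set φ := conjStarAlgAut ℂ _ hA.eigenvectorUnitary
  have hX : X = φ (φ.symm X) := (φ.apply_symm_apply X).symm
  have hcfc : cfc g A = φ (diagonal (RCLike.ofReal ∘ g ∘ hA.eigenvalues)) := hA.cfc_eq g
  rw [hcfc, hX, ← map_mul, ← map_mul, ← map_sub, frobeniusNorm'_conjStarAlgAut,
    frobeniusNorm'_diagonal_commutator, φ.symm_apply_apply]
  rfl

end Frobenius

/-- Let `f : [0,∞) → [0,∞)` be concave, `A` psd, and `‖X‖_F ≤ 1`. Then
`‖f(A)X − Xf(A)‖_F ≤ f(‖AX − XA‖_F)`. -/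
theorem statement_19 {n : ℕ} (f : ℝ → ℝ)
    (hf_concave : ConcaveOn ℝ (Set.Ici 0) f)
    (hf_nonneg : ∀ x : ℝ, 0 ≤ x → 0 ≤ f x)
    (A X : Matrix (Fin n) (Fin n) ℂ) (hA : A.PosSemidef)
    (hX : frobeniusNorm' X ≤ 1) :
    frobeniusNorm' (cfc f A * X - X * cfc f A) ≤ f (frobeniusNorm' (A * X - X * A)) := by
  have hH : A.IsHermitian := hA.isHermitian
  have hY : ∑ p : Fin n × Fin n,
      ‖(conjStarAlgAut ℂ _ hH.eigenvectorUnitary).symm X p.1 p.2‖ ^ 2 ≤ 1 := by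
    simp only [Fintype.sum_prod_type]
    rw [← frobeniusNorm'_sq, conjStarAlgAut_symm, frobeniusNorm'_conjStarAlgAut]
    exact pow_le_one₀ (frobeniusNorm'_nonneg X) hX
  have hAX := frobeniusNorm'_cfc_commutator hH id X
  rw [cfc_id ℝ A] at hAX
  rw [frobeniusNorm'_cfc_commutator hH f X, hAX]
  set Y := (conjStarAlgAut ℂ _ hH.eigenvectorUnitary).symm X
  set ev := hH.eigenvalues
  have hdiff (i j : Fin n) : (f (ev i) - f (ev j)) ^ 2 ≤ f |ev i - ev j| ^ 2 :=
    (sq_abs _).symm.le.trans <| pow_le_pow_left₀ (abs_nonneg _)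
      (hf_concave.abs_sub_map_le_map_abs_sub_of_nonneg hf_nonneg (hA.eigenvalues_nonneg i)
        (hA.eigenvalues_nonneg j)) 2
  calc _ ≤ √(∑ p : Fin n × Fin n, ‖Y p.1 p.2‖ ^ 2 * f |ev p.1 - ev p.2| ^ 2) := by
        simp only [Fintype.sum_prod_type]
        gcongr √(∑ _, ∑ _, _ * ?_) with i _ j _
        exact hdiff i j
    _ ≤ f √(∑ p : Fin n × Fin n, ‖Y p.1 p.2‖ ^ 2 * |ev p.1 - ev p.2| ^ 2) :=
        hf_concave.sqrt_sum_mul_map_sq_le_of_nonneg hf_nonneg _ (fun _ _ => sq_nonneg _)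
          (fun _ _ => abs_nonneg _) hY
    _ = _ := by simp only [Fintype.sum_prod_type, sq_abs, id]
end
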